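/- arXiv:1903.01962 — 5 statements merged into one kernel-verified Lean document; each statement's English description precedes it below -/
import Mathlib

section
/- Let x be a real number with x ≥ 2 and let k be a positive integer. Then |log(1 - x^{-k})| > Σ_{j>k} |log(1 - x^{-j})|. -/
/-!
Write `t = x⁻ᵏ`, so that the `j`-th term of the tail is `|log (1 - λ t)|` with
`λ = x^{-(j+1)}`. Since `s ↦ -log (1 - s)` is strictly convex and vanishes at `0`,
`|log (1 - λ t)| < λ |log (1 - t)|`. Summing, the tail is strictly less than
`(∑ⱼ x^{-(j+1)}) |log (1 - t)| = |log (1 - t)| / (x - 1)`, and `x - 1 ≥ 1`.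
-/

open Real

lemma abs_log_one_sub_mul_lt {t l : ℝ} (ht0 : 0 < t) (ht1 : t < 1) (hl0 : 0 < l) (hl1 : l < 1) :
    |log (1 - l * t)| < l * |log (1 - t)| := by
  have hconc := strictConcaveOn_log_Ioi.2 (x := 1 - t) (y := 1)
    (Set.mem_Ioi.2 (by linarith)) (Set.mem_Ioi.2 one_pos) (by linarith) hl0
    (by linarith : 0 < 1 - l) (by ring)
  simp only [smul_eq_mul, log_one, mul_zero, add_zero, mul_one] at hconc
  rw [show l * (1 - t) + (1 - l) = 1 - l * t by ring] at hconc
  have hlt0 : 0 < l * t := mul_pos hl0 ht0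
  have hlt1 : l * t < 1 := by nlinarith
  rw [abs_of_neg (log_neg (by linarith) (by linarith)),
    abs_of_neg (log_neg (by linarith) (by linarith))]
  linarith

lemma hasSum_inv_pow_succ {x : ℝ} (hx : 1 < x) :
    HasSum (fun j : ℕ => (x ^ (j + 1))⁻¹) (x - 1)⁻¹ := by
  have hgeom := (hasSum_geometric_of_lt_one (inv_nonneg.2 (by linarith))
    (inv_lt_one_of_one_lt₀ hx)).mul_left x⁻¹
  have hterms : (fun j : ℕ => (x ^ (j + 1))⁻¹) = fun j => x⁻¹ * x⁻¹ ^ j := by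
    ext j
    rw [← inv_pow, pow_succ']
  have hvalue : (x - 1)⁻¹ = x⁻¹ * (1 - x⁻¹)⁻¹ := by
    rw [← mul_inv, mul_sub, mul_one, mul_inv_cancel₀ (by linarith)]
  rwa [hterms, hvalue]

theorem log_tail_inequality (x : ℝ) (hx : 2 ≤ x) (k : ℕ) (hk : 0 < k) :
    ∑' j : ℕ, |Real.log (1 - (x ^ (k + 1 + j))⁻¹)| < |Real.log (1 - (x ^ k)⁻¹)| := by
  have hx1 : 1 < x := by linarith
  set L := |log (1 - (x ^ k)⁻¹)|
  have hterm (j : ℕ) : |log (1 - (x ^ (k + 1 + j))⁻¹)| < (x ^ (j + 1))⁻¹ * L := by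
    rw [show (x ^ (k + 1 + j))⁻¹ = (x ^ (j + 1))⁻¹ * (x ^ k)⁻¹ by
      rw [← mul_inv, ← pow_add, show j + 1 + k = k + 1 + j by omega]]
    exact abs_log_one_sub_mul_lt (by positivity)
      (inv_lt_one_of_one_lt₀ (one_lt_pow₀ hx1 hk.ne')) (by positivity)
      (inv_lt_one_of_one_lt₀ (one_lt_pow₀ hx1 j.succ_ne_zero))
  have hsum := (hasSum_inv_pow_succ hx1).mul_right L
  calc ∑' j : ℕ, |log (1 - (x ^ (k + 1 + j))⁻¹)|
      < (x - 1)⁻¹ * L :=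
        hsum.tsum_eq ▸ Summable.tsum_lt_tsum_of_nonneg (fun _ => abs_nonneg _)
          (fun j => (hterm j).le) (hterm 0) hsum.summable
    _ ≤ L := mul_le_of_le_one_left (abs_nonneg _) (inv_le_one_of_one_le₀ (by linarith))
end

section
/- Let x be a real number with x ≥ 2 and n a positive integer with μ(rad(n)) = 1. Then ((x^{q(n)} - 1)/x^{q(n)}) · x^{φ(n)} ≤ Φ_n(x) < x^{φ(n)}, with equality on the left only when n = 1. -/
open Polynomial ArithmeticFunction

def rad (n : ℕ) : ℕ := n.primeFactors.prod _root_.id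

lemma rad_eq (n : ℕ) : rad n = ∏ p ∈ n.primeFactors, p := rfl

lemma rad_dvd (n : ℕ) : rad n ∣ n := by
  rw [rad_eq]; exact Nat.prod_primeFactors_dvd n

lemma sq_prod_primes : ∀ s : Finset ℕ, (∀ p ∈ s, p.Prime) → Squarefree (∏ p ∈ s, p) := by
  intro s
  induction s using Finset.induction_on with
  | empty => intro _; simpa using squarefree_one
  | insert p s' hx ih =>
    intro h
    rw [Finset.prod_insert hx]
    have hp := h p (Finset.mem_insert_self p s')
    have hcop : Nat.Coprime p (∏ q ∈ s', q) := by
      apply Nat.Coprime.prod_right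
      intro q hq
      exact (Nat.coprime_primes hp (h q (Finset.mem_insert_of_mem hq))).mpr
        (fun e => hx (e ▸ hq))
    exact (Nat.squarefree_mul hcop).mpr ⟨hp.squarefree,
      ih (fun q hq => h q (Finset.mem_insert_of_mem hq))⟩

lemma rad_squarefree (n : ℕ) : Squarefree (rad n) := by
  rw [rad_eq]
  exact sq_prod_primes _ (fun p hp => Nat.prime_of_mem_primeFactors hp)

lemma rad_eq_self {n : ℕ} (hn : Squarefree n) : rad n = n := by
  rw [rad_eq]; exact Nat.prod_primeFactors_of_squarefree hn

lemma rad_eq_one {n : ℕ} (hn : 0 < n) (h : rad n = 1) : n = 1 := by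
  by_contra h1
  have hp := Nat.minFac_prime h1
  have hd : n.minFac ∣ rad n := by
    rw [rad_eq]
    exact Finset.dvd_prod_of_mem _ (Nat.mem_primeFactors.mpr ⟨hp, Nat.minFac_dvd n, hn.ne'⟩)
  rw [h] at hd
  exact hp.one_lt.ne' (Nat.eq_one_of_dvd_one hd)

lemma cyclotomic_rad (n : ℕ) (hn : 0 < n) :
    (∀ y : ℝ, (cyclotomic n ℝ).eval y = (cyclotomic (rad n) ℝ).eval (y ^ (n / rad n)))
      ∧ n.totient = (n / rad n) * (rad n).totient := by
  induction n using Nat.strong_induction_on with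
  | _ n IH =>
  by_cases hsq : Squarefree n
  · rw [rad_eq_self hsq]
    simp [Nat.div_self hn]
  · obtain ⟨p, hp, hpp⟩ := by
      simpa [Nat.squarefree_iff_prime_squarefree] using hsq
    have hn0 : n ≠ 0 := hn.ne'
    set m := n / p with hm
    have hpd : p ∣ n := dvd_trans (dvd_mul_right p p) hpp
    have hnm : n = p * m := (Nat.mul_div_cancel' hpd).symm
    have hm0 : m ≠ 0 := by rintro h; rw [h, mul_zero] at hnm; exact hn0 hnm
    have hpm : p ∣ m := by
      have := (Nat.dvd_div_iff_mul_dvd hpd).mpr hpp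
      simpa [hm] using this
    have hmlt : m < n := by
      conv_rhs => rw [hnm]
      calc m = 1 * m := (one_mul m).symm
      _ < p * m := (Nat.mul_lt_mul_right (Nat.pos_of_ne_zero hm0)).mpr hp.one_lt
    have hrad : rad n = rad m := by
      rw [rad_eq, rad_eq, hnm, Nat.primeFactors_mul hp.ne_zero hm0, hp.primeFactors,
        Finset.union_eq_right.mpr ?_]
      intro q hq
      simp only [Finset.mem_singleton] at hq
      exact hq ▸ Nat.mem_primeFactors.mpr ⟨hp, hpm, hm0⟩
    obtain ⟨IH1, IH2⟩ := IH m hmlt (Nat.pos_of_ne_zero hm0)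
    have hradm : rad m ∣ m := rad_dvd m
    have hq : n / rad n = p * (m / rad m) := by
      rw [hrad]
      conv_lhs => rw [hnm]
      exact Nat.mul_div_assoc p hradm
    constructor
    · intro y
      have hcyc : cyclotomic n ℝ = expand ℝ p (cyclotomic m ℝ) := by
        rw [cyclotomic_expand_eq_cyclotomic hp hpm, mul_comm m p, hnm]
      rw [hq, hcyc, expand_eval, IH1 (y ^ p), hrad, ← pow_mul]
    · have ht : n.totient = p * m.totient := by
        conv_lhs => rw [hnm]
        exact Nat.totient_mul_of_prime_of_dvd hp hpm
      rw [ht, IH2, hq, hrad, mul_assoc]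

open Polynomial ArithmeticFunction
open scoped ArithmeticFunction.Moebius

lemma S1 {t u v wa wb P : ℝ} (ht : 0 < t) (ht2 : t ≤ 1/2)
    (hu : 0 < u) (hu4 : u ≤ 1/4) (hv : 0 < v) (hv2 : v ≤ u/2)
    (hwa : 0 ≤ wa) (hwa2 : wa ≤ u/25) (hwb : 0 ≤ wb) (hwb2 : wb ≤ u/25)
    (hP : 0 ≤ P) (hP2 : P ≤ u*v/2) :
    (1-u)*(1-v)*(1+5*wa)*(1+5*wb) < 1 - P := by
  nlinarith [mul_pos hu hv, mul_nonneg hwa hwb, sq_nonneg u, mul_pos (mul_pos hu hv) hu,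
    mul_nonneg (mul_nonneg hwa hwb) (by linarith : (0:ℝ) ≤ 1 - u),
    mul_le_mul hwa2 hwb2 hwb (by positivity)]

lemma S2 {t u v w5 wab P : ℝ} (ht : 0 < t) (ht2 : t ≤ 1/2)
    (hu : 0 < u) (hu4 : u ≤ 1/4) (hv : 0 < v) (hv2 : v ≤ u/2)
    (hw5 : 0 ≤ w5) (hw52 : w5 ≤ u/4) (hwab : 0 ≤ wab) (hwab2 : wab ≤ u/25)
    (hP : 0 ≤ P) :
    (1-P)*(1+5*w5)*(1+5*wab) ≤ (1-u)*(1-v)*(1+5*u) := by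
  nlinarith [mul_nonneg hw5 hwab, mul_pos hu hv, sq_nonneg u,
    mul_nonneg (mul_nonneg hw5 hwab) hP, mul_pos (mul_pos hu hu) hu,
    mul_nonneg hP (mul_nonneg hw5 hwab)]

lemma S3 {t u v w5 wab P : ℝ} (ht : 0 < t) (ht2 : t ≤ 1/2)
    (hu : 0 < u) (hu2 : u ≤ t^2) (hv : 0 < v) (hv2 : v ≤ t^3)
    (hw5 : 0 ≤ w5) (hw52 : w5 ≤ t^5) (hwab : 0 ≤ wab) (hwab2 : wab ≤ t^5/100)
    (hP : 0 ≤ P) (hP1 : P ≤ 1) :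
    (1-t)*(1-P)*(1+5*w5)*(1+5*wab) ≤ (1-u)*(1-v)*(1-(3/7)*t)*(1+6*t^5) := by
  have h1 : (1-t)*(1-P)*(1+5*w5)*(1+5*wab) ≤ (1-t)*1*(1+5*t^5)*(1+5*(t^5/100)) := by
    gcongr <;> nlinarith [pow_pos ht 5]
  have h2 : (1-t^2)*(1-t^3)*(1-(3/7)*t)*(1+6*t^5) ≤ (1-u)*(1-v)*(1-(3/7)*t)*(1+6*t^5) := by
    have ht5 : (0:ℝ) < 1 + 6*t^5 := by positivity
    have h37 : (0:ℝ) < 1-(3/7)*t := by nlinarith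
    gcongr <;> nlinarith [pow_pos ht 2, pow_pos ht 3, pow_pos ht 5]
  have h3 : (1-t)*1*(1+5*t^5)*(1+5*(t^5/100)) ≤ (1-t^2)*(1-t^3)*(1-(3/7)*t)*(1+6*t^5) := by
    nlinarith [pow_pos ht 5, sq_nonneg t, pow_le_pow_left₀ ht.le ht2 5, pow_le_pow_left₀ ht.le ht2 4,
      pow_le_pow_left₀ ht.le ht2 2, pow_le_pow_left₀ ht.le ht2 3,
      mul_pos (pow_pos ht 5) (pow_pos ht 5), mul_pos ht (pow_pos ht 5)]
  linarith

set_option maxHeartbeats 1600000 in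
lemma cyclotomic_sq_bounds : ∀ n : ℕ, Squarefree n → μ n = 1 → 1 < n → ∀ x : ℝ, 2 ≤ x →
    (1 - x⁻¹) * x ^ n.totient < (cyclotomic n ℝ).eval x ∧
    (cyclotomic n ℝ).eval x ≤ (1 - x⁻¹) * (1 + 5 * x⁻¹ ^ n.minFac) * x ^ n.totient ∧
    (cyclotomic n ℝ).eval x ≤ (1 - (3/7) * x⁻¹) * (1 + 6 * x⁻¹ ^ 5) * x ^ n.totient := by
  intro n
  induction n using Nat.strong_induction_on with
  | _ n IH =>
  intro hsq hμ h1 x hx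
  have hn0 : n ≠ 0 := by omega
  obtain ⟨a, ha_def⟩ : ∃ a, a = n.minFac := ⟨_, rfl⟩
  have ha : a.Prime := ha_def ▸ Nat.minFac_prime h1.ne'
  have had : a ∣ n := ha_def ▸ Nat.minFac_dvd n
  obtain ⟨m₁, hm₁_def⟩ : ∃ m, m = n / a := ⟨_, rfl⟩
  have hnm : n = a * m₁ := by rw [hm₁_def]; exact (Nat.mul_div_cancel' had).symm
  have hm₁0 : m₁ ≠ 0 := by rintro h; rw [h, mul_zero] at hnm; exact hn0 hnm
  have hm₁sq : Squarefree m₁ := hsq.squarefree_of_dvd ⟨a, by rw [hnm]; ring⟩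
  have hnam : ¬ a ∣ m₁ := by
    intro h
    have : a * a ∣ n := by rw [hnm]; exact mul_dvd_mul_left a h
    have := hsq a this
    simp [Nat.isUnit_iff, ha.ne_one] at this
  have hcop : Nat.Coprime a m₁ := (Nat.Prime.coprime_iff_not_dvd ha).mpr hnam
  have hμm₁ : μ m₁ = -1 := by
    have hmm := isMultiplicative_moebius.map_mul_of_coprime hcop
    rw [← hnm, hμ, moebius_apply_prime ha] at hmm
    omega
  have hm₁1 : m₁ ≠ 1 := by
    intro h; rw [h, ArithmeticFunction.moebius_apply_one] at hμm₁; omega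
  obtain ⟨b, hb_def⟩ : ∃ b, b = m₁.minFac := ⟨_, rfl⟩
  have hb : b.Prime := hb_def ▸ Nat.minFac_prime hm₁1
  have hbd : b ∣ m₁ := hb_def ▸ Nat.minFac_dvd _
  obtain ⟨M, hM_def⟩ : ∃ M, M = m₁ / b := ⟨_, rfl⟩
  have hmM : m₁ = b * M := by rw [hM_def]; exact (Nat.mul_div_cancel' hbd).symm
  have hM0 : M ≠ 0 := by rintro h; rw [h, mul_zero] at hmM; exact hm₁0 hmM
  have hMsq : Squarefree M := hm₁sq.squarefree_of_dvd ⟨b, by rw [hmM]; ring⟩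
  have hbM : ¬ b ∣ M := by
    intro h
    have : b * b ∣ m₁ := by rw [hmM]; exact mul_dvd_mul_left b h
    have := hm₁sq b this
    simp [Nat.isUnit_iff, hb.ne_one] at this
  have hcop2 : Nat.Coprime b M := (Nat.Prime.coprime_iff_not_dvd hb).mpr hbM
  have hμM : μ M = 1 := by
    have hmm := isMultiplicative_moebius.map_mul_of_coprime hcop2
    rw [← hmM, hμm₁, moebius_apply_prime hb] at hmm
    omega
  have hab : a < b := by
    refine lt_of_le_of_ne ?_ (fun e => hnam (e ▸ hbd))
    rw [ha_def]
    exact Nat.minFac_le_of_dvd hb.two_le (hbd.trans ⟨a, by rw [hnm]; ring⟩)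
  have hb3 : 3 ≤ b := by have := ha.two_le; omega
  obtain ⟨κ, hκ_def⟩ : ∃ κ, κ = max (b+1) 5 := ⟨_, rfl⟩
  have hκb : b + 1 ≤ κ := hκ_def ▸ le_max_left _ _
  have hκ5 : 5 ≤ κ := hκ_def ▸ le_max_right _ _
  have hκM : M ≠ 1 → κ ≤ M.minFac := by
    intro hM1
    have hMp := Nat.minFac_prime hM1
    have hMdvd : M ∣ m₁ := ⟨b, by rw [hmM]; ring⟩
    have hble : b ≤ M.minFac := by
      rw [hb_def]; exact Nat.minFac_le_of_dvd hMp.two_le ((Nat.minFac_dvd M).trans hMdvd)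
    have hne : M.minFac ≠ b := fun e => hbM (e ▸ Nat.minFac_dvd M)
    have h4 : M.minFac ≠ 4 := fun e => by rw [e] at hMp; norm_num at hMp
    omega
  have hMlt : M < n := by
    have h1M : 1 ≤ M := Nat.pos_of_ne_zero hM0
    have h6 : 2 * (2 * M) ≤ a * (b * M) :=
      Nat.mul_le_mul ha.two_le (Nat.mul_le_mul hb.two_le le_rfl)
    have hn' : n = a * (b * M) := by rw [hnm, hmM]
    omega
  -- totient
  have hφ : n.totient = (a-1) * ((b-1) * M.totient) := by
    rw [hnm, Nat.totient_mul hcop, hmM, Nat.totient_mul hcop2,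
      Nat.totient_prime ha, Nat.totient_prime hb]
  have hE : n.totient + (a * M.totient + b * M.totient) = (a*b) * M.totient + M.totient := by
    have key : ∀ A B C : ℕ, 2 ≤ A → 2 ≤ B → (A-1) * ((B-1) * C) + (A * C + B * C) = A*B*C + C := by
      intro A B C hA hB
      obtain ⟨A', rfl⟩ : ∃ A', A = A' + 1 := ⟨A-1, by omega⟩
      obtain ⟨B', rfl⟩ : ∃ B', B = B' + 1 := ⟨B-1, by omega⟩
      simp only [Nat.add_sub_cancel]
      ring
    rw [hφ]; exact key a b M.totient ha.two_le hb.two_le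
  
  -- real setup
  have hx0 : (0:ℝ) < x := by linarith
  have ht : (0:ℝ) < x⁻¹ := by positivity
  have ht2 : x⁻¹ ≤ 1/2 := by
    rw [inv_le_comm₀ hx0 (by norm_num)]; linarith
  have h2le : ∀ k : ℕ, k ≠ 0 → 2 ≤ x ^ k := by
    intro k hk
    calc (2:ℝ) ≤ x := hx
    _ ≤ x ^ k := le_self_pow₀ (by linarith) hk
  -- component bounds
  have comp : ∀ k : ℕ, k ≠ 0 →
      (1 - x⁻¹^k) * x ^ (k * M.totient) ≤ (cyclotomic M ℝ).eval (x^k) ∧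
      (cyclotomic M ℝ).eval (x^k) ≤ (1 - x⁻¹^k) * (1 + 5 * x⁻¹ ^ (k*κ)) * x ^ (k * M.totient) := by
    intro k hk
    have hy := h2le k hk
    have hy0 : (0:ℝ) < x^k := by positivity
    have hinv : (x^k)⁻¹ = x⁻¹^k := (inv_pow x k).symm
    have hyi : (0:ℝ) < x⁻¹^k := by positivity
    have hyi2 : x⁻¹^k ≤ 1/2 := by
      rw [← hinv, inv_le_comm₀ hy0 (by norm_num)]; linarith
    by_cases hM1 : M = 1
    · rw [hM1]
      simp only [cyclotomic_one, eval_sub, eval_X, eval_one, Nat.totient_one, mul_one]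
      have he : (1 - x⁻¹^k) * x^k = x^k - 1 := by
        rw [← hinv]; field_simp
      constructor
      · rw [he]
      · have hw : (0:ℝ) ≤ 5 * x⁻¹^(k*κ) := by positivity
        nlinarith [mul_nonneg (by linarith : (0:ℝ) ≤ x^k - 1) hw]
    · have hM2 : 1 < M := by omega
      obtain ⟨c1, c2, _⟩ := IH M hMlt hMsq hμM hM2 (x^k) hy
      rw [hinv, ← pow_mul] at c1
      rw [hinv, ← pow_mul, ← pow_mul] at c2
      refine ⟨c1.le, c2.trans ?_⟩
      have hmono : x⁻¹^(k*M.minFac) ≤ x⁻¹^(k*κ) :=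
        pow_le_pow_of_le_one ht.le (by linarith) (Nat.mul_le_mul_left k (hκM hM1))
      have h1 : (0:ℝ) ≤ 1 - x⁻¹^k := by linarith
      gcongr
  -- key identities
  have key1 : ∀ y : ℝ, (cyclotomic m₁ ℝ).eval y * (cyclotomic M ℝ).eval y
      = (cyclotomic M ℝ).eval (y ^ b) := by
    intro y
    have hexp := cyclotomic_expand_eq_cyclotomic_mul hb hbM (R := ℝ)
    have h2 : cyclotomic (M*b) ℝ = cyclotomic m₁ ℝ := by rw [mul_comm, ← hmM]
    have h3 := congrArg (eval y) hexp
    rw [expand_eval, eval_mul, h2] at h3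
    exact h3.symm
  have key2 : (cyclotomic n ℝ).eval x * (cyclotomic m₁ ℝ).eval x
      = (cyclotomic m₁ ℝ).eval (x ^ a) := by
    have hexp := cyclotomic_expand_eq_cyclotomic_mul ha hnam (R := ℝ)
    have h2 : cyclotomic (m₁*a) ℝ = cyclotomic n ℝ := by rw [mul_comm, ← hnm]
    have h3 := congrArg (eval x) hexp
    rw [expand_eval, eval_mul, h2] at h3
    exact h3.symm
  have hPmaeq : (cyclotomic m₁ ℝ).eval (x^a) * (cyclotomic M ℝ).eval (x^a)
      = (cyclotomic M ℝ).eval (x^(a*b)) := by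
    have := key1 (x^a)
    rwa [← pow_mul] at this
  have master : (cyclotomic n ℝ).eval x *
      ((cyclotomic M ℝ).eval (x^a) * (cyclotomic M ℝ).eval (x^b)) =
      (cyclotomic M ℝ).eval (x^(a*b)) * (cyclotomic M ℝ).eval x := by
    have k1 := key1 x
    linear_combination (-((cyclotomic n ℝ).eval x * (cyclotomic M ℝ).eval (x^a))) * k1
      + ((cyclotomic M ℝ).eval x * (cyclotomic M ℝ).eval (x^a)) * key2
      + ((cyclotomic M ℝ).eval x) * hPmaeq
  -- component bounds at the four exponents
  have hane : a ≠ 0 := ha.ne_zero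
  have hbne : b ≠ 0 := hb.ne_zero
  have habne : a * b ≠ 0 := by positivity
  obtain ⟨hB1, hB2⟩ := comp 1 one_ne_zero
  obtain ⟨hCa1, hCa2⟩ := comp a hane
  obtain ⟨hCb1, hCb2⟩ := comp b hbne
  obtain ⟨hA1, hA2⟩ := comp (a*b) habne
  simp only [pow_one, one_mul] at hB1 hB2
  -- power inequality facts
  have hple : ∀ i j : ℕ, i ≤ j → x⁻¹^j ≤ x⁻¹^i :=
    fun i j hij => pow_le_pow_of_le_one ht.le (by linarith) hij
  have ha2 : 2 ≤ a := ha.two_le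
  have hu0 : (0:ℝ) < x⁻¹^a := by positivity
  have hv0 : (0:ℝ) < x⁻¹^b := by positivity
  have ht2' : x⁻¹^2 ≤ 1/4 := by
    calc x⁻¹^2 ≤ (1/2)^2 := pow_le_pow_left₀ ht.le ht2 2
    _ = 1/4 := by norm_num
  have ht8' : x⁻¹^8 ≤ 1/256 := by
    calc x⁻¹^8 ≤ (1/2)^8 := pow_le_pow_left₀ ht.le ht2 8
    _ = 1/256 := by norm_num
  have hu4 : x⁻¹^a ≤ 1/4 := by
    calc x⁻¹^a ≤ x⁻¹^2 := hple 2 a ha2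
    _ ≤ 1/4 := ht2'
  have huv : x⁻¹^b ≤ x⁻¹ * x⁻¹^a := by
    calc x⁻¹^b ≤ x⁻¹^(a+1) := hple (a+1) b hab
    _ = x⁻¹ * x⁻¹^a := by ring
  have hv2 : x⁻¹^b ≤ x⁻¹^a/2 := by nlinarith
  have hvt3 : x⁻¹^b ≤ x⁻¹^3 := hple 3 b hb3
  have hut2 : x⁻¹^a ≤ x⁻¹^2 := hple 2 a ha2
  have hPub : x⁻¹^(a*b) ≤ x⁻¹^a * x⁻¹^b / 2 := by
    have hnat : a + b + 1 ≤ a * b := by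
      calc a + b + 1 ≤ 2 * b := by omega
      _ ≤ a * b := Nat.mul_le_mul_right b ha.two_le
    calc x⁻¹^(a*b) ≤ x⁻¹^(a+b+1) := hple _ _ hnat
    _ = x⁻¹ * (x⁻¹^a * x⁻¹^b) := by ring
    _ ≤ x⁻¹^a * x⁻¹^b / 2 := by nlinarith [mul_pos hu0 hv0]
  have hwa2 : x⁻¹^(a*κ) ≤ x⁻¹^a/25 := by
    have hnat : a + 8 ≤ a * κ := by
      calc a + 8 ≤ a * 5 := by omega
      _ ≤ a * κ := Nat.mul_le_mul_left a hκ5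
    calc x⁻¹^(a*κ) ≤ x⁻¹^(a+8) := hple _ _ hnat
    _ = x⁻¹^a * x⁻¹^8 := by ring
    _ ≤ x⁻¹^a/25 := by
        nlinarith [mul_le_mul_of_nonneg_left ht8' (pow_nonneg ht.le a)]
  have hwb2 : x⁻¹^(b*κ) ≤ x⁻¹^a/25 := by
    have hnat : a + 8 ≤ b * κ := by
      calc a + 8 ≤ b * 5 := by omega
      _ ≤ b * κ := Nat.mul_le_mul_left b hκ5
    calc x⁻¹^(b*κ) ≤ x⁻¹^(a+8) := hple _ _ hnat
    _ = x⁻¹^a * x⁻¹^8 := by ring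
    _ ≤ x⁻¹^a/25 := by
        nlinarith [mul_le_mul_of_nonneg_left ht8' (pow_nonneg ht.le a)]
  have hw52 : x⁻¹^κ ≤ x⁻¹^a/4 := by
    have hnat : a + 2 ≤ κ := by omega
    calc x⁻¹^κ ≤ x⁻¹^(a+2) := hple _ _ hnat
    _ = x⁻¹^a * x⁻¹^2 := by ring
    _ ≤ x⁻¹^a/4 := by
        nlinarith [mul_le_mul_of_nonneg_left ht2' (pow_nonneg ht.le a)]
  have hw55 : x⁻¹^κ ≤ x⁻¹^5 := hple 5 κ hκ5
  have hwab2 : x⁻¹^(a*b*κ) ≤ x⁻¹^a/25 := by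
    have hnat : a + 8 ≤ a * b * κ := by
      have h1 : a * 3 ≤ a * b := Nat.mul_le_mul_left a hb3
      have h2 : (a * b) * 5 ≤ (a * b) * κ := Nat.mul_le_mul_left _ hκ5
      calc a + 8 ≤ (a * 3) * 5 := by omega
      _ ≤ (a * b) * 5 := Nat.mul_le_mul_right 5 h1
      _ ≤ a * b * κ := h2
    calc x⁻¹^(a*b*κ) ≤ x⁻¹^(a+8) := hple _ _ hnat
    _ = x⁻¹^a * x⁻¹^8 := by ring
    _ ≤ x⁻¹^a/25 := by
        nlinarith [mul_le_mul_of_nonneg_left ht8' (pow_nonneg ht.le a)]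
  have hwab5 : x⁻¹^(a*b*κ) ≤ x⁻¹^5/100 := by
    have hnat : 5 + 8 ≤ a * b * κ := by
      have h1 : 2 * 3 ≤ a * b := Nat.mul_le_mul ha.two_le hb3
      have h2 : (a * b) * 5 ≤ (a * b) * κ := Nat.mul_le_mul_left _ hκ5
      calc 5 + 8 ≤ (2 * 3) * 5 := by omega
      _ ≤ (a * b) * 5 := Nat.mul_le_mul_right 5 h1
      _ ≤ a * b * κ := h2
    have h5 : (0:ℝ) < x⁻¹^5 := by positivity
    calc x⁻¹^(a*b*κ) ≤ x⁻¹^(5+8) := hple _ _ hnat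
    _ = x⁻¹^5 * x⁻¹^8 := by ring
    _ ≤ x⁻¹^5/100 := by
        nlinarith [mul_le_mul_of_nonneg_left ht8' (pow_nonneg ht.le 5)]
  have hP0 : (0:ℝ) ≤ x⁻¹^(a*b) := by positivity
  have hP1 : x⁻¹^(a*b) ≤ 1 := pow_le_one₀ ht.le (by linarith)
  have hw0 : ∀ k : ℕ, (0:ℝ) ≤ x⁻¹^k := fun k => by positivity
  -- positivity of components
  have hxpow : ∀ k : ℕ, (0:ℝ) < x ^ k := fun k => pow_pos hx0 k
  have hCaPos : (0:ℝ) < (cyclotomic M ℝ).eval (x^a) :=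
    lt_of_lt_of_le (mul_pos (by linarith : (0:ℝ) < 1 - x⁻¹^a) (hxpow (a*M.totient))) hCa1
  have hCbPos : (0:ℝ) < (cyclotomic M ℝ).eval (x^b) :=
    lt_of_lt_of_le (mul_pos (by nlinarith : (0:ℝ) < 1 - x⁻¹^b) (hxpow (b*M.totient))) hCb1
  have hCC : (0:ℝ) < (cyclotomic M ℝ).eval (x^a) * (cyclotomic M ℝ).eval (x^b) :=
    mul_pos hCaPos hCbPos
  have h1t : (0:ℝ) ≤ 1 - x⁻¹ := by linarith
  -- the three S-inequalities instantiated
  have s1 := S1 ht ht2 hu0 hu4 hv0 hv2 (hw0 (a*κ)) hwa2 (hw0 (b*κ)) hwb2 hP0 (by linarith [hPub] : x⁻¹^(a*b) ≤ x⁻¹^a * x⁻¹^b/2)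
  have s2 := S2 ht ht2 hu0 hu4 hv0 hv2 (hw0 κ) hw52 (hw0 (a*b*κ)) hwab2 hP0
  have s3 := S3 ht ht2 hu0 hut2 hv0 hvt3 (hw0 κ) hw55 (hw0 (a*b*κ)) hwab5 hP0 hP1
  -- exponent bookkeeping over ℝ
  have hxE : x ^ n.totient * (x^(a*M.totient) * x^(b*M.totient))
      = x^(a*b*M.totient) * x^(M.totient) := by
    rw [← pow_add x (a*M.totient) (b*M.totient), ← pow_add x n.totient (a*M.totient + b*M.totient),
      ← pow_add x (a*b*M.totient) M.totient, hE]
  have hPlt : x⁻¹^(a*b) < 1 := by nlinarith [hPub, hu4, hv2, hu0, hv0]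
  have hAPos : (0:ℝ) < (cyclotomic M ℝ).eval (x^(a*b)) :=
    lt_of_lt_of_le (mul_pos (by linarith : (0:ℝ) < 1 - x⁻¹^(a*b)) (hxpow (a*b*M.totient))) hA1
  have hv1 : (0:ℝ) ≤ 1 - x⁻¹^b := by linarith [hv2, hu4]
  have hBPos : (0:ℝ) < (cyclotomic M ℝ).eval x :=
    lt_of_lt_of_le (mul_pos (by linarith : (0:ℝ) < 1 - x⁻¹) (hxpow M.totient)) hB1
  refine ⟨?_, ?_, ?_⟩
  · -- strict lower bound
    have chain : (1 - x⁻¹) * x ^ n.totient *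
        ((cyclotomic M ℝ).eval (x^a) * (cyclotomic M ℝ).eval (x^b)) <
        (cyclotomic M ℝ).eval (x^(a*b)) * (cyclotomic M ℝ).eval x := by
      calc (1 - x⁻¹) * x ^ n.totient *
          ((cyclotomic M ℝ).eval (x^a) * (cyclotomic M ℝ).eval (x^b))
          ≤ (1 - x⁻¹) * x ^ n.totient *
            (((1 - x⁻¹^a) * (1 + 5 * x⁻¹^(a*κ)) * x^(a*M.totient)) *
             ((1 - x⁻¹^b) * (1 + 5 * x⁻¹^(b*κ)) * x^(b*M.totient))) := by
            refine mul_le_mul_of_nonneg_left ?_ (mul_nonneg h1t (hxpow n.totient).le)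
            exact mul_le_mul hCa2 hCb2 hCbPos.le
              (mul_nonneg (mul_nonneg (by linarith) (by positivity)) (hxpow _).le)
        _ = ((1 - x⁻¹^a) * (1 - x⁻¹^b) * (1 + 5 * x⁻¹^(a*κ)) * (1 + 5 * x⁻¹^(b*κ))) *
            ((1 - x⁻¹) * (x ^ n.totient * (x^(a*M.totient) * x^(b*M.totient)))) := by ring
        _ < (1 - x⁻¹^(a*b)) *
            ((1 - x⁻¹) * (x ^ n.totient * (x^(a*M.totient) * x^(b*M.totient)))) := by
            refine mul_lt_mul_of_pos_right s1 ?_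
            exact mul_pos (by linarith : (0:ℝ) < 1 - x⁻¹) (by positivity)
        _ = (1 - x⁻¹^(a*b)) * ((1 - x⁻¹) * (x^(a*b*M.totient) * x^(M.totient))) := by
            rw [hxE]
        _ = ((1 - x⁻¹^(a*b)) * x^(a*b*M.totient)) * ((1 - x⁻¹) * x^(M.totient)) := by ring
        _ ≤ (cyclotomic M ℝ).eval (x^(a*b)) * (cyclotomic M ℝ).eval x := by
            exact mul_le_mul hA1 hB1 (mul_nonneg h1t (hxpow _).le) hAPos.le
    rw [← master] at chain
    exact lt_of_mul_lt_mul_right chain hCC.le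
  · -- upper bound with 5*t^a correction
    rw [← ha_def]
    have chain : (cyclotomic n ℝ).eval x *
        ((cyclotomic M ℝ).eval (x^a) * (cyclotomic M ℝ).eval (x^b)) ≤
        ((1 - x⁻¹) * (1 + 5 * x⁻¹^a) * x ^ n.totient) *
        ((cyclotomic M ℝ).eval (x^a) * (cyclotomic M ℝ).eval (x^b)) := by
      rw [master]
      calc (cyclotomic M ℝ).eval (x^(a*b)) * (cyclotomic M ℝ).eval x
          ≤ ((1 - x⁻¹^(a*b)) * (1 + 5 * x⁻¹^(a*b*κ)) * x^(a*b*M.totient)) *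
            ((1 - x⁻¹) * (1 + 5 * x⁻¹^κ) * x^(M.totient)) := by
            refine mul_le_mul hA2 hB2 hBPos.le ?_
            exact mul_nonneg (mul_nonneg (by linarith) (by positivity)) (hxpow _).le
        _ = ((1 - x⁻¹^(a*b)) * (1 + 5 * x⁻¹^κ) * (1 + 5 * x⁻¹^(a*b*κ))) *
            ((1 - x⁻¹) * (x^(a*b*M.totient) * x^(M.totient))) := by ring
        _ ≤ ((1 - x⁻¹^a) * (1 - x⁻¹^b) * (1 + 5 * x⁻¹^a)) *
            ((1 - x⁻¹) * (x^(a*b*M.totient) * x^(M.totient))) := by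
            refine mul_le_mul_of_nonneg_right s2 ?_
            exact mul_nonneg h1t (by positivity)
        _ = ((1 - x⁻¹^a) * (1 - x⁻¹^b) * (1 + 5 * x⁻¹^a)) *
            ((1 - x⁻¹) * (x ^ n.totient * (x^(a*M.totient) * x^(b*M.totient)))) := by
            rw [hxE]
        _ = ((1 - x⁻¹) * (1 + 5 * x⁻¹^a) * x ^ n.totient) *
            (((1 - x⁻¹^a) * x^(a*M.totient)) * ((1 - x⁻¹^b) * x^(b*M.totient))) := by ring
        _ ≤ ((1 - x⁻¹) * (1 + 5 * x⁻¹^a) * x ^ n.totient) *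
            ((cyclotomic M ℝ).eval (x^a) * (cyclotomic M ℝ).eval (x^b)) := by
            refine mul_le_mul_of_nonneg_left ?_ ?_
            · exact mul_le_mul hCa1 hCb1 (mul_nonneg hv1 (hxpow _).le) hCaPos.le
            · exact mul_nonneg (mul_nonneg h1t (by positivity)) (hxpow _).le
    exact le_of_mul_le_mul_right chain hCC
  · -- margin upper bound
    have chain : (cyclotomic n ℝ).eval x *
        ((cyclotomic M ℝ).eval (x^a) * (cyclotomic M ℝ).eval (x^b)) ≤
        ((1 - 3/7 * x⁻¹) * (1 + 6 * x⁻¹^5) * x ^ n.totient) *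
        ((cyclotomic M ℝ).eval (x^a) * (cyclotomic M ℝ).eval (x^b)) := by
      rw [master]
      calc (cyclotomic M ℝ).eval (x^(a*b)) * (cyclotomic M ℝ).eval x
          ≤ ((1 - x⁻¹^(a*b)) * (1 + 5 * x⁻¹^(a*b*κ)) * x^(a*b*M.totient)) *
            ((1 - x⁻¹) * (1 + 5 * x⁻¹^κ) * x^(M.totient)) := by
            refine mul_le_mul hA2 hB2 hBPos.le ?_
            exact mul_nonneg (mul_nonneg (by linarith) (by positivity)) (hxpow _).le
        _ = ((1 - x⁻¹) * (1 - x⁻¹^(a*b)) * (1 + 5 * x⁻¹^κ) * (1 + 5 * x⁻¹^(a*b*κ))) *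
            (x^(a*b*M.totient) * x^(M.totient)) := by ring
        _ ≤ ((1 - x⁻¹^a) * (1 - x⁻¹^b) * (1 - 3/7 * x⁻¹) * (1 + 6 * x⁻¹^5)) *
            (x^(a*b*M.totient) * x^(M.totient)) := by
            refine mul_le_mul_of_nonneg_right ?_ (by positivity)
            exact s3
        _ = ((1 - x⁻¹^a) * (1 - x⁻¹^b) * (1 - 3/7 * x⁻¹) * (1 + 6 * x⁻¹^5)) *
            (x ^ n.totient * (x^(a*M.totient) * x^(b*M.totient))) := by rw [hxE]
        _ = ((1 - 3/7 * x⁻¹) * (1 + 6 * x⁻¹^5) * x ^ n.totient) *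
            (((1 - x⁻¹^a) * x^(a*M.totient)) * ((1 - x⁻¹^b) * x^(b*M.totient))) := by ring
        _ ≤ ((1 - 3/7 * x⁻¹) * (1 + 6 * x⁻¹^5) * x ^ n.totient) *
            ((cyclotomic M ℝ).eval (x^a) * (cyclotomic M ℝ).eval (x^b)) := by
            refine mul_le_mul_of_nonneg_left ?_ ?_
            · exact mul_le_mul hCa1 hCb1 (mul_nonneg hv1 (hxpow _).le) hCaPos.le
            · exact mul_nonneg (mul_nonneg (by linarith) (by positivity)) (hxpow _).le
    exact le_of_mul_le_mul_right chain hCC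

theorem cyclotomic_bounds_moebius_one (x : ℝ) (hx : 2 ≤ x) (n : ℕ) (hn : 0 < n)
    (hμ : ArithmeticFunction.moebius (rad n) = 1) :
    ((x ^ (n / rad n) - 1) / x ^ (n / rad n)) * x ^ n.totient ≤
        (Polynomial.cyclotomic n ℝ).eval x ∧
    (Polynomial.cyclotomic n ℝ).eval x < x ^ n.totient ∧
    (((x ^ (n / rad n) - 1) / x ^ (n / rad n)) * x ^ n.totient =
        (Polynomial.cyclotomic n ℝ).eval x → n = 1) := by
  have hx0 : (0:ℝ) < x := by linarith
  by_cases hn1 : n = 1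
  · subst hn1
    have hrad1 : rad 1 = 1 := by simp [rad]
    rw [hrad1]
    simp only [Nat.div_self Nat.one_pos, cyclotomic_one, eval_sub, eval_X, eval_one,
      Nat.totient_one, pow_one]
    have he : (x - 1) / x * x = x - 1 := by field_simp
    exact ⟨le_of_eq he, by linarith, fun _ => trivial⟩
  · obtain ⟨hred, hφ⟩ := cyclotomic_rad n hn
    have hq0 : n / rad n ≠ 0 := by
      have h1 : rad n ∣ n := rad_dvd n
      have h2 : 0 < rad n := Nat.pos_of_dvd_of_pos h1 hn
      have := Nat.div_pos (Nat.le_of_dvd hn h1) h2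
      omega
    set q := n / rad n with hq_def
    set y := x ^ q with hy_def
    have hy2 : (2:ℝ) ≤ y := by
      calc (2:ℝ) ≤ x := hx
      _ ≤ x ^ q := le_self_pow₀ (by linarith) hq0
    have hy0 : (0:ℝ) < y := by positivity
    have hfrac : (y - 1) / y = 1 - y⁻¹ := by field_simp
    have hpowtot : x ^ n.totient = y ^ (rad n).totient := by
      rw [hy_def, ← pow_mul, ← hφ]
    have heval : (cyclotomic n ℝ).eval x = (cyclotomic (rad n) ℝ).eval y := hred x
    have hr1 : rad n ≠ 1 := fun h => hn1 (rad_eq_one hn h)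
    have hrsq : Squarefree (rad n) := rad_squarefree n
    have hr2 : 1 < rad n := by
      have : rad n ≠ 0 := hrsq.ne_zero
      omega
    obtain ⟨low, up5, up37⟩ := cyclotomic_sq_bounds (rad n) hrsq hμ hr2 y hy2
    have hyi : (0:ℝ) < y⁻¹ := by positivity
    have hyi2 : y⁻¹ ≤ 1/2 := by
      rw [inv_le_comm₀ hy0 (by norm_num)]; linarith
    have hupper : (cyclotomic (rad n) ℝ).eval y < y ^ (rad n).totient := by
      have hy4 : y⁻¹^4 ≤ 1/16 := by
        calc y⁻¹^4 ≤ (1/2)^4 := pow_le_pow_left₀ hyi.le hyi2 4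
        _ = 1/16 := by norm_num
      have hcoef : (1 - 3/7 * y⁻¹) * (1 + 6 * y⁻¹^5) < 1 := by
        have h5 : y⁻¹^5 ≤ (1/16) * y⁻¹ := by
          calc y⁻¹^5 = y⁻¹^4 * y⁻¹ := by ring
          _ ≤ (1/16) * y⁻¹ := mul_le_mul_of_nonneg_right hy4 hyi.le
        nlinarith [mul_pos hyi (pow_pos hyi 5), pow_pos hyi 5]
      calc (cyclotomic (rad n) ℝ).eval y
          ≤ (1 - 3/7 * y⁻¹) * (1 + 6 * y⁻¹^5) * y ^ (rad n).totient := up37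
      _ < 1 * y ^ (rad n).totient := mul_lt_mul_of_pos_right hcoef (by positivity)
      _ = y ^ (rad n).totient := one_mul _
    have hLHS : (y - 1) / y * x ^ n.totient = (1 - y⁻¹) * y ^ (rad n).totient := by
      rw [hpowtot, hfrac]
    refine ⟨?_, ?_, ?_⟩
    · rw [hLHS, heval]; exact low.le
    · rw [heval, hpowtot]; exact hupper
    · intro heq
      rw [hLHS, heval] at heq
      exact absurd heq (ne_of_lt low)
end

section
/- For every complex number z with |z| ≥ 2 and every positive integer n, (1/2)|z|^{φ(n)} ≤ |Φ_n(z)| < 2|z|^{φ(n)}, with equality in the first inequality only when (n, z) = (1, 2) or (n, z) = (2, -2). -/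
set_option maxHeartbeats 1000000

open Polynomial Finset
open scoped ArithmeticFunction
open scoped ArithmeticFunction.Moebius

noncomputable def Complex.abs : AbsoluteValue ℂ ℝ := NormedField.toAbsoluteValue ℂ

theorem Complex.norm_eq_abs (z : ℂ) : ‖z‖ = Complex.abs z := rfl

theorem Complex.sq_abs (z : ℂ) : Complex.abs z ^ 2 = Complex.normSq z := Complex.sq_norm z


lemma two_thirds_lt_log_two : (2/3 : ℝ) < Real.log 2 := by
  have h := Real.exp_one_lt_d9
  have hpos : (0:ℝ) < Real.exp (2/3) := Real.exp_pos _
  have h3 : Real.exp (2/3) ^ 3 = Real.exp 1 ^ 2 := by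
    rw [← Real.exp_nat_mul, ← Real.exp_nat_mul]; norm_num
  have h8 : Real.exp (2/3) ^ 3 < 8 := by
    rw [h3]; nlinarith [Real.exp_pos 1]
  have h2 : Real.exp (2/3) < 2 := by nlinarith [sq_nonneg (Real.exp (2/3) - 2), sq_nonneg (Real.exp (2/3) + 2)]
  have := Real.exp_lt_exp.mp (h2.trans_le (Real.exp_log (by norm_num : (0:ℝ) < 2)).symm.le)
  linarith


lemma abs_one_sub_pow_le (u : ℂ) (d : ℕ) :
    Complex.abs (1 - u ^ d) ≤ 1 + Complex.abs u ^ d := by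
  rw [← Complex.norm_eq_abs, ← Complex.norm_eq_abs]
  calc ‖1 - u ^ d‖ ≤ ‖(1:ℂ)‖ + ‖u ^ d‖ := norm_sub_le _ _
  _ = 1 + ‖u‖ ^ d := by simp [norm_pow]
  _ = 1 + ‖u‖ ^ d := rfl

lemma le_abs_one_sub_pow (u : ℂ) (d : ℕ) :
    1 - Complex.abs u ^ d ≤ Complex.abs (1 - u ^ d) := by
  rw [← Complex.norm_eq_abs, ← Complex.norm_eq_abs]
  calc (1:ℝ) - ‖u‖ ^ d = ‖(1:ℂ)‖ - ‖u ^ d‖ := by simp [norm_pow]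
  _ ≤ ‖1 - u ^ d‖ := norm_sub_norm_le _ _


lemma abs_log_le_of_mem (t x : ℝ) (hx0 : 0 ≤ x) (hx1 : x < 1)
    (h1 : 1 - x ≤ t) (h2 : t ≤ 1 + x) : |Real.log t| ≤ -Real.log (1 - x) := by
  have hxpos : (0:ℝ) < 1 - x := by linarith
  have htpos : (0:ℝ) < t := by linarith
  rw [abs_le]
  refine ⟨by rw [neg_neg]; exact Real.log_le_log hxpos h1, ?_⟩
  have h3 : t ≤ (1 - x)⁻¹ := by
    have : (1+x) ≤ (1-x)⁻¹ := by
      rw [inv_eq_one_div, le_div_iff₀ hxpos]; nlinarith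
    linarith
  calc Real.log t ≤ Real.log (1-x)⁻¹ := Real.log_le_log htpos h3
  _ = -Real.log (1-x) := Real.log_inv _

lemma neg_log_one_sub_le (x : ℝ) (h0 : 0 ≤ x) (h4 : x ≤ 1/4) :
    -Real.log (1 - x) ≤ (4/3) * x := by
  have h1 : (0:ℝ) < 1 - x := by linarith
  have hlog := Real.log_le_sub_one_of_pos (show (0:ℝ) < (1-x)⁻¹ by positivity)
  rw [Real.log_inv] at hlog
  have h2 : (1-x)⁻¹ - 1 = x / (1-x) := by field_simp; ring
  rw [h2] at hlog
  have h5 : x / (1-x) ≤ (4/3)*x := by rw [div_le_iff₀ h1]; nlinarith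
  linarith

lemma log_one_sub_le (x : ℝ) (h0 : 0 ≤ x) (h1 : x < 1) : Real.log (1 - x) ≤ -x := by
  have := Real.log_le_sub_one_of_pos (show (0:ℝ) < 1 - x by linarith)
  linarith

-- geometric bound
lemma sum_pow_le_two_pow (S : Finset ℕ) (k : ℕ) (hS : ∀ d ∈ S, k ≤ d)
    (ρ : ℝ) (h0 : 0 ≤ ρ) (h1 : ρ ≤ 1/2) : ∑ d ∈ S, ρ ^ d ≤ 2 * ρ ^ k := by
  rcases S.eq_empty_or_nonempty with rfl | hne
  · simp; positivity
  · set M := S.max' hne + 1 with hM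
    have hsub : S ⊆ Finset.Ico k M := by
      intro d hd
      exact Finset.mem_Ico.mpr ⟨hS d hd, Nat.lt_succ_of_le (S.le_max' d hd)⟩
    have h2 : ∑ d ∈ S, ρ ^ d ≤ ∑ d ∈ Finset.Ico k M, ρ ^ d :=
      Finset.sum_le_sum_of_subset_of_nonneg hsub (fun i _ _ => by positivity)
    have h3 : ∑ d ∈ Finset.Ico k M, ρ ^ d ≤ ρ ^ k / (1 - ρ) :=
      geom_sum_Ico_le_of_lt_one h0 (by linarith)
    have h4 : ρ ^ k / (1 - ρ) ≤ 2 * ρ ^ k := by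
      rw [div_le_iff₀ (by linarith)]
      have : (0:ℝ) ≤ ρ ^ k := by positivity
      nlinarith
    linarith


lemma pow_le_half (ρ : ℝ) (h0 : 0 ≤ ρ) (h1 : ρ ≤ 1/2) (d : ℕ) (hd : d ≠ 0) :
    ρ ^ d ≤ 1/2 := by
  calc ρ ^ d ≤ ρ := pow_le_of_le_one h0 (by linarith) hd
  _ ≤ 1/2 := h1

lemma half_le_abs_one_sub_pow (u : ℂ) (hu : Complex.abs u ≤ 1/2) (d : ℕ) (hd : d ≠ 0) :
    1/2 ≤ Complex.abs (1 - u ^ d) := by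
  have h1 : Complex.abs u ^ d ≤ 1/2 := pow_le_half _ (by positivity) hu d hd
  have h2 : 1 - Complex.abs u ^ d ≤ Complex.abs (1 - u ^ d) := by
    rw [← Complex.norm_eq_abs, ← Complex.norm_eq_abs]
    calc (1:ℝ) - ‖u‖ ^ d = ‖(1:ℂ)‖ - ‖u ^ d‖ := by simp [norm_pow]
    _ ≤ ‖1 - u ^ d‖ := norm_sub_norm_le _ _
  linarith

lemma log_factor (z : ℂ) (hz : 2 ≤ Complex.abs z) (k : ℕ) (hk : 0 < k) :
    Real.log (Complex.abs (z ^ k - 1)) =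
      (k : ℝ) * Real.log (Complex.abs z) + Real.log (Complex.abs (1 - z⁻¹ ^ k)) := by
  have hz0 : z ≠ 0 := by
    intro h; rw [h] at hz; simp at hz; linarith
  have hid : z ^ k - 1 = z ^ k * (1 - z⁻¹ ^ k) := by
    rw [mul_sub, mul_one, ← mul_pow, mul_inv_cancel₀ hz0, one_pow]
  have hvabs : Complex.abs z⁻¹ ≤ 1/2 := by
    rw [map_inv₀]
    rw [inv_le_comm₀ (by linarith) (by norm_num)]
    linarith
  have h2 : (0:ℝ) < Complex.abs (1 - z⁻¹ ^ k) :=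
    lt_of_lt_of_le (by norm_num) (half_le_abs_one_sub_pow _ hvabs k hk.ne')
  rw [hid, map_mul, map_pow, Real.log_mul (by positivity) h2.ne', Real.log_pow]


lemma cyclo_abs_pos (z : ℂ) (hz : 2 ≤ Complex.abs z) (d : ℕ) (hd : 0 < d) :
    0 < Complex.abs ((cyclotomic d ℂ).eval z) := by
  rcases eq_or_lt_of_le (by positivity : (0:ℝ) ≤ Complex.abs ((cyclotomic d ℂ).eval z)) with h | h
  · exfalso
    have hroot : (cyclotomic d ℂ).IsRoot z := by
      simpa [IsRoot, eq_comm] using (Complex.abs.eq_zero.mp h.symm)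
    have : NeZero (d : ℂ) := ⟨by exact_mod_cast hd.ne'⟩
    have hprim : IsPrimitiveRoot z d := (isRoot_cyclotomic_iff).mp hroot
    have h1 : z ^ d = 1 := hprim.pow_eq_one
    have : Complex.abs z ^ d = 1 := by rw [← map_pow, h1, map_one]
    have h2 : (2:ℝ) ^ d ≤ Complex.abs z ^ d := pow_le_pow_left₀ (by norm_num) hz d
    have h3 : (2:ℝ) ≤ 2 ^ d := by
      calc (2:ℝ) = 2^1 := (pow_one 2).symm
      _ ≤ 2^d := pow_le_pow_right₀ (by norm_num) hd
    linarith
  · exact h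

lemma log_X_pow_sub_one (z : ℂ) (hz : 2 ≤ Complex.abs z) (k : ℕ) (hk : 0 < k) :
    ∑ d ∈ k.divisors, Real.log (Complex.abs ((cyclotomic d ℂ).eval z))
      = Real.log (Complex.abs (z ^ k - 1)) := by
  have h := prod_cyclotomic_eq_X_pow_sub_one hk ℂ
  have h2 : ∏ d ∈ k.divisors, Complex.abs ((cyclotomic d ℂ).eval z)
      = Complex.abs (z ^ k - 1) := by
    rw [← map_prod, ← eval_prod, h]; simp
  rw [← h2, Real.log_prod]
  intro d hd
  exact (cyclo_abs_pos z hz d (Nat.pos_of_mem_divisors hd)).ne'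

lemma moebius_log (z : ℂ) (hz : 2 ≤ Complex.abs z) (n : ℕ) (hn : 0 < n) :
    Real.log (Complex.abs ((cyclotomic n ℂ).eval z)) =
      ∑ x ∈ n.divisorsAntidiagonal,
        (μ x.1 : ℤ) • Real.log (Complex.abs (z ^ x.2 - 1)) := by
  have := (ArithmeticFunction.sum_eq_iff_sum_smul_moebius_eq
    (f := fun d => Real.log (Complex.abs ((cyclotomic d ℂ).eval z)))
    (g := fun k => Real.log (Complex.abs (z ^ k - 1)))).mp
    (fun k hk => log_X_pow_sub_one z hz k hk) n hn
  exact this.symm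

lemma moebius_totient (L : ℝ) (n : ℕ) (hn : 0 < n) :
    (n.totient : ℝ) * L =
      ∑ x ∈ n.divisorsAntidiagonal, (μ x.1 : ℤ) • ((x.2 : ℝ) * L) := by
  have := (ArithmeticFunction.sum_eq_iff_sum_smul_moebius_eq
    (f := fun d => (d.totient : ℝ) * L)
    (g := fun k => (k : ℝ) * L)).mp ?_ n hn
  · exact this.symm
  · intro k hk
    rw [← Finset.sum_mul]
    congr 1
    exact_mod_cast congrArg (Nat.cast : ℕ → ℝ) (Nat.sum_totient k)


lemma master_sum (z : ℂ) (hz : 2 ≤ Complex.abs z) (n : ℕ) (hn : 0 < n) :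
    Real.log (Complex.abs ((cyclotomic n ℂ).eval z))
      - (n.totient : ℝ) * Real.log (Complex.abs z)
    = ∑ d ∈ n.divisors, ((μ (n / d) : ℤ) : ℝ) * Real.log (Complex.abs (1 - z⁻¹ ^ d)) := by
  rw [moebius_log z hz n hn, moebius_totient (Real.log (Complex.abs z)) n hn,
    ← Finset.sum_sub_distrib]
  have hstep : ∀ x ∈ n.divisorsAntidiagonal,
      (μ x.1 : ℤ) • Real.log (Complex.abs (z ^ x.2 - 1))
        - (μ x.1 : ℤ) • ((x.2 : ℝ) * Real.log (Complex.abs z))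
      = ((μ x.1 : ℤ) : ℝ) * Real.log (Complex.abs (1 - z⁻¹ ^ x.2)) := by
    intro x hx
    have hx2 : 0 < x.2 := by
      rcases (Nat.mem_divisorsAntidiagonal).mp hx with ⟨h1, h2⟩
      rcases Nat.eq_zero_or_pos x.2 with h | h
      · exfalso; rw [h, mul_zero] at h1; exact h2 h1.symm
      · exact h
    rw [← smul_sub, log_factor z hz x.2 hx2]
    have : (x.2:ℝ) * Real.log (Complex.abs z) + Real.log (Complex.abs (1 - z⁻¹ ^ x.2))
        - (x.2:ℝ) * Real.log (Complex.abs z) = Real.log (Complex.abs (1 - z⁻¹ ^ x.2)) := by ring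
    rw [this, zsmul_eq_mul]
  rw [Finset.sum_congr rfl hstep, ← Nat.map_div_left_divisors, Finset.sum_map]
  simp
  rfl


lemma core_odd (m : ℕ) (hm3 : 3 ≤ m) (hodd : Odd m) (hsf : Squarefree m)
    (u : ℂ) (hu0 : u ≠ 0) (hu : Complex.abs u ≤ 1/2) :
    |∑ d ∈ m.divisors, ((μ (m / d) : ℤ) : ℝ) * Real.log (Complex.abs (1 - u ^ d))|
      < Real.log 2 := by
  set ρ := Complex.abs u with hρdef
  have hρ0 : 0 < ρ := by
    simpa [hρdef] using Complex.abs.pos hu0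
  have hm0 : 0 < m := by omega
  set p := m.minFac with hpdef
  have hp : p.Prime := Nat.minFac_prime (by omega)
  have hpdvd : p ∣ m := Nat.minFac_dvd m
  have hmmod : m % 2 = 1 := Nat.odd_iff.mp hodd
  have hpne2 : p ≠ 2 := by
    intro h
    have : 2 ∣ m := h ▸ hpdvd
    omega
  have hp3 : 3 ≤ p := by have := hp.two_le; omega
  have hpodd : p % 2 = 1 := Nat.odd_iff.mp (hp.odd_of_ne_two hpne2)
  have h1mem : (1:ℕ) ∈ m.divisors := Nat.one_mem_divisors.mpr hm0.ne'
  have hpmem : p ∈ m.divisors := Nat.mem_divisors.mpr ⟨hpdvd, hm0.ne'⟩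
  set f : ℕ → ℝ := fun d => ((μ (m / d) : ℤ) : ℝ) * Real.log (Complex.abs (1 - u ^ d))
    with hfdef
  have hsplit : ∑ d ∈ m.divisors, f d
      = f 1 + (f p + ∑ d ∈ (m.divisors.erase 1).erase p, f d) := by
    rw [Finset.add_sum_erase _ f (Finset.mem_erase.mpr ⟨hp.ne_one, hpmem⟩),
      Finset.add_sum_erase _ f h1mem]
  -- Möbius identities
  have hcop : Nat.Coprime p (m / p) := by
    rw [hp.coprime_iff_not_dvd]
    intro hdvd
    have h2 : p * p ∣ p * (m / p) := Nat.mul_dvd_mul_left p hdvd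
    rw [Nat.mul_div_cancel' hpdvd] at h2
    exact hp.not_isUnit (hsf p h2)
  have hmum : μ m = μ p * μ (m / p) := by
    conv_lhs => rw [← Nat.mul_div_cancel' hpdvd]
    exact ArithmeticFunction.isMultiplicative_moebius.map_mul_of_coprime hcop
  have hmup : (μ (m / p) : ℤ) = -(μ m) := by
    rw [hmum, ArithmeticFunction.moebius_apply_prime hp]; ring
  have hmuabs : |μ m| = 1 := ArithmeticFunction.abs_moebius_eq_one_of_squarefree hsf
  -- basic ρ facts
  have hρle1 : ρ ≤ 1 := by linarith
  have hρp14 : ρ ^ p ≤ 1/4 := by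
    calc ρ ^ p ≤ ρ ^ 2 := pow_le_pow_of_le_one hρ0.le hρle1 (by omega)
    _ ≤ (1/2:ℝ)^2 := by nlinarith
    _ ≤ 1/4 := by norm_num
  have hρppos : 0 < ρ ^ p := by positivity
  have habspolb : 1 - ρ ^ p ≤ Complex.abs (1 - u ^ p) := le_abs_one_sub_pow u p
  have habspoub : Complex.abs (1 - u ^ p) ≤ 1 + ρ ^ p := abs_one_sub_pow_le u p
  have habsp_pos : (0:ℝ) < Complex.abs (1 - u ^ p) := by linarith
  have habs1lb : 1 - ρ ≤ Complex.abs (1 - u) := by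
    have := le_abs_one_sub_pow u 1; simpa using this
  have habs1ub : Complex.abs (1 - u) ≤ 1 + ρ := by
    have := abs_one_sub_pow_le u 1; simpa using this
  have habs1_pos : (0:ℝ) < Complex.abs (1 - u) := by linarith
  set A := Real.log (Complex.abs (1 - u)) - Real.log (Complex.abs (1 - u ^ p)) with hAdef
  -- bound (i) : A ≤ log (3/2) + (4/3) ρ^p
  have hAi : A ≤ Real.log (3/2) + (4/3) * ρ ^ p := by
    have h1 : Real.log (Complex.abs (1 - u)) ≤ Real.log (3/2) :=
      Real.log_le_log habs1_pos (by linarith)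
    have h2 : Real.log (1 - ρ ^ p) ≤ Real.log (Complex.abs (1 - u ^ p)) :=
      Real.log_le_log (by linarith) habspolb
    have h3 : -Real.log (1 - ρ ^ p) ≤ (4/3) * ρ ^ p :=
      neg_log_one_sub_le _ hρppos.le hρp14
    simp only [hAdef]
    linarith
  -- bound (ii) : -A ≤ log 2 - ρ^p
  have hAii : -A ≤ Real.log 2 - ρ ^ p := by
    have hgeomid : 1 - u ^ p = (1 - u) * ∑ i ∈ Finset.range p, u ^ i := by
      linear_combination geom_sum_mul u p
    have hsumle : Complex.abs (∑ i ∈ Finset.range p, u ^ i) ≤ (1 - ρ ^ p) / (1 - ρ) := by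
      calc Complex.abs (∑ i ∈ Finset.range p, u ^ i)
          ≤ ∑ i ∈ Finset.range p, ρ ^ i := by
            rw [← Complex.norm_eq_abs]
            refine (norm_sum_le _ _).trans ?_
            apply le_of_eq
            exact Finset.sum_congr rfl fun i _ => by rw [norm_pow, Complex.norm_eq_abs]
      _ = (1 - ρ ^ p)/(1 - ρ) := by
            rw [geom_sum_eq (by intro h; rw [h] at hu; norm_num at hu)]
            rw [← neg_div_neg_eq]; ring_nf
    have hfrac : (1 - ρ ^ p)/(1 - ρ) ≤ 2 * (1 - ρ ^ p) := by
      rw [div_le_iff₀ (by linarith)]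
      nlinarith
    have habsle : Complex.abs (1 - u ^ p) ≤ Complex.abs (1 - u) * (2 * (1 - ρ ^ p)) := by
      rw [hgeomid, map_mul]
      have h0 : (0:ℝ) ≤ Complex.abs (1 - u) := habs1_pos.le
      exact mul_le_mul_of_nonneg_left (hsumle.trans hfrac) h0
    have hlogle : Real.log (Complex.abs (1 - u ^ p))
        ≤ Real.log (Complex.abs (1 - u)) + (Real.log 2 + Real.log (1 - ρ ^ p)) := by
      calc Real.log (Complex.abs (1 - u ^ p))
          ≤ Real.log (Complex.abs (1 - u) * (2 * (1 - ρ ^ p))) :=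
            Real.log_le_log habsp_pos habsle
      _ = Real.log (Complex.abs (1 - u)) + (Real.log 2 + Real.log (1 - ρ ^ p)) := by
            rw [Real.log_mul habs1_pos.ne' (by nlinarith), Real.log_mul (by norm_num) (by nlinarith)]
    have hl1 : Real.log (1 - ρ ^ p) ≤ -(ρ ^ p) := log_one_sub_le _ hρppos.le (by linarith)
    simp only [hAdef]
    linarith
  -- rest bound
  set S' := (m.divisors.erase 1).erase p with hS'def
  have hS'ge : ∀ d ∈ S', p + 2 ≤ d := by
    intro d hd
    rcases Finset.mem_erase.mp hd with ⟨hdp, hd1'⟩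
    rcases Finset.mem_erase.mp hd1' with ⟨hd1, hdmem⟩
    have hddvd : d ∣ m := (Nat.mem_divisors.mp hdmem).1
    have hd2 : 2 ≤ d := by
      have := Nat.pos_of_mem_divisors hdmem
      omega
    have hpled : p ≤ d := Nat.minFac_le_of_dvd hd2 hddvd
    have hdodd : d % 2 = 1 := by
      rcases Nat.even_or_odd d with he | ho
      · exfalso
        have h2d : 2 ∣ d := he.two_dvd
        have : 2 ∣ m := h2d.trans hddvd
        omega
      · exact Nat.odd_iff.mp ho
    omega
  have hrest : |∑ d ∈ S', f d| ≤ (2/3) * ρ ^ p := by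
    have hterm : ∀ d ∈ S', |f d| ≤ (4/3) * ρ ^ d := by
      intro d hd
      have hd2 : 2 ≤ d := by have := hS'ge d hd; omega
      have hx1 : ρ ^ d ≤ 1/4 := by
        calc ρ ^ d ≤ ρ ^ 2 := pow_le_pow_of_le_one hρ0.le hρle1 hd2
        _ ≤ (1/2:ℝ)^2 := by nlinarith
        _ ≤ 1/4 := by norm_num
      have hlog : |Real.log (Complex.abs (1 - u ^ d))| ≤ -Real.log (1 - ρ ^ d) :=
        abs_log_le_of_mem _ _ (by positivity) (by linarith)
          (le_abs_one_sub_pow u d) (abs_one_sub_pow_le u d)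
      have hlog2 : |Real.log (Complex.abs (1 - u ^ d))| ≤ (4/3) * ρ ^ d :=
        hlog.trans (neg_log_one_sub_le _ (by positivity) hx1)
      have hmu : |((μ (m / d) : ℤ) : ℝ)| ≤ 1 := by
        rw [← Int.cast_abs]
        exact_mod_cast ArithmeticFunction.abs_moebius_le_one
      calc |f d| = |((μ (m / d) : ℤ) : ℝ)| * |Real.log (Complex.abs (1 - u ^ d))| := by
            rw [hfdef]; exact abs_mul _ _
      _ ≤ 1 * ((4/3) * ρ ^ d) := by
            apply mul_le_mul hmu hlog2 (abs_nonneg _) (by norm_num)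
      _ = (4/3) * ρ ^ d := by ring
    calc |∑ d ∈ S', f d| ≤ ∑ d ∈ S', |f d| := Finset.abs_sum_le_sum_abs _ _
    _ ≤ ∑ d ∈ S', (4/3) * ρ ^ d := Finset.sum_le_sum hterm
    _ = (4/3) * ∑ d ∈ S', ρ ^ d := by rw [Finset.mul_sum]
    _ ≤ (4/3) * (2 * ρ ^ (p + 2)) := by
          have := sum_pow_le_two_pow S' (p+2) hS'ge ρ hρ0.le hu
          linarith
    _ ≤ (2/3) * ρ ^ p := by
          rw [pow_add]
          have hρ2 : ρ^2 ≤ 1/4 := by nlinarith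
          nlinarith [mul_le_mul_of_nonneg_left hρ2 (by positivity : (0:ℝ) ≤ ρ^p)]
  -- combine
  have hf1p : f 1 + f p = ((μ m : ℤ) : ℝ) * A := by
    simp only [hfdef, hAdef, Nat.div_one]
    rw [hmup]
    push_cast
    ring
  have hmuabsR : |((μ m : ℤ) : ℝ)| = 1 := by
    rw [← Int.cast_abs, hmuabs]; norm_num
  have htot : |∑ d ∈ m.divisors, f d| ≤ |A| + (2/3) * ρ ^ p := by
    rw [hsplit, ← add_assoc, hf1p]
    calc |((μ m : ℤ) : ℝ) * A + ∑ d ∈ S', f d|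
        ≤ |((μ m : ℤ) : ℝ) * A| + |∑ d ∈ S', f d| := abs_add_le _ _
    _ = |A| + |∑ d ∈ S', f d| := by rw [abs_mul, hmuabsR, one_mul]
    _ ≤ |A| + (2/3) * ρ ^ p := by linarith
  have hρp18 : ρ ^ p ≤ 1/8 := by
    calc ρ ^ p ≤ ρ ^ 3 := pow_le_pow_of_le_one hρ0.le hρle1 hp3
    _ ≤ (1/2:ℝ)^3 := by
        apply pow_le_pow_left₀ hρ0.le hu
    _ ≤ 1/8 := by norm_num
  have hlog43 : (1/4:ℝ) < Real.log 2 - Real.log (3/2) := by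
    have h34 : Real.log (3/4) < -(1/4) := by
      have := Real.log_lt_sub_one_of_pos (by norm_num : (0:ℝ) < 3/4) (by norm_num)
      linarith
    have hd : Real.log ((3:ℝ)/4) = Real.log (3/2) - Real.log 2 := by
      rw [show (3/4:ℝ) = (3/2)/2 by norm_num]
      exact Real.log_div (by norm_num) (by norm_num)
    linarith
  rcases abs_cases A with ⟨hA1, _⟩ | ⟨hA1, _⟩
  · -- |A| = A
    calc |∑ d ∈ m.divisors, f d| ≤ |A| + (2/3) * ρ ^ p := htot
    _ = A + (2/3) * ρ ^ p := by rw [hA1]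
    _ ≤ Real.log (3/2) + (4/3) * ρ ^ p + (2/3) * ρ ^ p := by linarith
    _ = Real.log (3/2) + 2 * ρ ^ p := by ring
    _ ≤ Real.log (3/2) + 1/4 := by linarith
    _ < Real.log 2 := by linarith
  · -- |A| = -A
    calc |∑ d ∈ m.divisors, f d| ≤ |A| + (2/3) * ρ ^ p := htot
    _ = -A + (2/3) * ρ ^ p := by rw [hA1]
    _ ≤ Real.log 2 - ρ ^ p + (2/3) * ρ ^ p := by linarith
    _ = Real.log 2 - (1/3) * ρ ^ p := by ring
    _ < Real.log 2 := by linarith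


lemma odd_of_dvd_odd {m d : ℕ} (hodd : Odd m) (hdvd : d ∣ m) : Odd d := by
  rcases Nat.even_or_odd d with he | ho
  · exfalso
    have h2 : 2 ∣ m := he.two_dvd.trans hdvd
    have := Nat.odd_iff.mp hodd
    omega
  · exact ho

lemma core_nonsf (n : ℕ) (hn : 0 < n) (hnsf : ¬ Squarefree n)
    (u : ℂ) (hu : Complex.abs u ≤ 1/2) :
    |∑ d ∈ n.divisors, ((μ (n / d) : ℤ) : ℝ) * Real.log (Complex.abs (1 - u ^ d))|
      < Real.log 2 := by
  set ρ := Complex.abs u with hρdef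
  have hρ0 : 0 ≤ ρ := by positivity
  set f : ℕ → ℝ := fun d => ((μ (n / d) : ℤ) : ℝ) * Real.log (Complex.abs (1 - u ^ d))
    with hfdef
  have h1mem : (1:ℕ) ∈ n.divisors := Nat.one_mem_divisors.mpr hn.ne'
  have hf1 : |f 1| = 0 := by
    simp [hfdef, Nat.div_one, ArithmeticFunction.moebius_eq_zero_of_not_squarefree hnsf]
  have hterm : ∀ d ∈ n.divisors.erase 1, |f d| ≤ (4/3) * ρ ^ d := by
    intro d hd
    rcases Finset.mem_erase.mp hd with ⟨hd1, hdmem⟩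
    have hd2 : 2 ≤ d := by have := Nat.pos_of_mem_divisors hdmem; omega
    have hρle1 : ρ ≤ 1 := by linarith
    have hx1 : ρ ^ d ≤ 1/4 := by
      calc ρ ^ d ≤ ρ ^ 2 := pow_le_pow_of_le_one hρ0 hρle1 hd2
      _ ≤ (1/2:ℝ)^2 := by nlinarith
      _ ≤ 1/4 := by norm_num
    have hlog2 : |Real.log (Complex.abs (1 - u ^ d))| ≤ (4/3) * ρ ^ d :=
      (abs_log_le_of_mem _ _ (by positivity) (by linarith)
        (le_abs_one_sub_pow u d) (abs_one_sub_pow_le u d)).trans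
        (neg_log_one_sub_le _ (by positivity) hx1)
    have hmu : |((μ (n / d) : ℤ) : ℝ)| ≤ 1 := by
      rw [← Int.cast_abs]
      exact_mod_cast ArithmeticFunction.abs_moebius_le_one
    calc |f d| = |((μ (n / d) : ℤ) : ℝ)| * |Real.log (Complex.abs (1 - u ^ d))| :=
          abs_mul _ _
    _ ≤ 1 * ((4/3) * ρ ^ d) := mul_le_mul hmu hlog2 (abs_nonneg _) (by norm_num)
    _ = (4/3) * ρ ^ d := by ring
  calc |∑ d ∈ n.divisors, f d| ≤ ∑ d ∈ n.divisors, |f d| := Finset.abs_sum_le_sum_abs _ _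
  _ = ∑ d ∈ n.divisors.erase 1, |f d| := (Finset.sum_erase (f := fun d => |f d|) (a := 1) n.divisors hf1).symm
  _ ≤ ∑ d ∈ n.divisors.erase 1, (4/3) * ρ ^ d := Finset.sum_le_sum hterm
  _ = (4/3) * ∑ d ∈ n.divisors.erase 1, ρ ^ d := by rw [Finset.mul_sum]
  _ ≤ (4/3) * (2 * ρ ^ 2) := by
      have := sum_pow_le_two_pow (n.divisors.erase 1) 2
        (fun d hd => by
          rcases Finset.mem_erase.mp hd with ⟨hd1, hdmem⟩
          have := Nat.pos_of_mem_divisors hdmem; omega) ρ hρ0 hu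
      linarith
  _ ≤ 2/3 := by nlinarith
  _ < Real.log 2 := two_thirds_lt_log_two

lemma even_reduction (m : ℕ) (hm0 : 0 < m) (hodd : Odd m)
    (v : ℂ) (hv : Complex.abs v ≤ 1/2) :
    ∑ d ∈ (2*m).divisors, ((μ ((2*m) / d) : ℤ) : ℝ) * Real.log (Complex.abs (1 - v ^ d))
    = ∑ d ∈ m.divisors, ((μ (m / d) : ℤ) : ℝ) * Real.log (Complex.abs (1 - (-v) ^ d)) := by
  set G : ℕ → ℝ := fun d => ((μ ((2*m) / d) : ℤ) : ℝ) * Real.log (Complex.abs (1 - v ^ d))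
    with hGdef
  have hmmod : m % 2 = 1 := Nat.odd_iff.mp hodd
  have h2m0 : 2*m ≠ 0 := by omega
  have hfilter : (2*m).divisors.filter (fun a => Odd a) = m.divisors := by
    ext a
    simp only [Finset.mem_filter, Nat.mem_divisors]
    constructor
    · rintro ⟨⟨hdvd, _⟩, hoa⟩
      refine ⟨?_, by omega⟩
      have hcop : Nat.Coprime 2 a := by
        rw [Nat.prime_two.coprime_iff_not_dvd]
        intro h2a
        have := Nat.odd_iff.mp hoa
        omega
      exact (Nat.Coprime.dvd_of_dvd_mul_left hcop.symm hdvd)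
    · rintro ⟨hdvd, _⟩
      exact ⟨⟨hdvd.mul_left 2, h2m0⟩, odd_of_dvd_odd hodd hdvd⟩
  have hfilter2 : (2*m).divisors.filter (fun a => ¬ Odd a)
      = m.divisors.image (fun d => 2*d) := by
    ext a
    simp only [Finset.mem_filter, Nat.mem_divisors, Finset.mem_image]
    constructor
    · rintro ⟨⟨hdvd, _⟩, hoa⟩
      have hea : 2 ∣ a := by
        rcases Nat.even_or_odd a with he | ho
        · exact he.two_dvd
        · exact absurd ho hoa
      obtain ⟨b, rfl⟩ := hea
      refine ⟨b, ⟨?_, by omega⟩, rfl⟩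
      exact (Nat.mul_dvd_mul_iff_left (by norm_num : 0 < 2)).mp hdvd
    · rintro ⟨b, ⟨hdvd, _⟩, rfl⟩
      exact ⟨⟨Nat.mul_dvd_mul_left 2 hdvd, h2m0⟩, by
        simp [Nat.odd_iff, Nat.mul_mod_right]⟩
  have hinj : ∀ x ∈ m.divisors, ∀ y ∈ m.divisors, 2*x = 2*y → x = y := by
    intro x _ y _ h; omega
  rw [← Finset.sum_filter_add_sum_filter_not ((2*m).divisors) (fun a => Odd a) G,
    hfilter, hfilter2, Finset.sum_image hinj, ← Finset.sum_add_distrib]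
  refine Finset.sum_congr rfl ?_
  intro d hd
  rcases Nat.mem_divisors.mp hd with ⟨hdvd, _⟩
  have hd0 : d ≠ 0 := by
    rintro rfl
    rcases hdvd with ⟨c, hc⟩
    omega
  have hddodd : Odd d := odd_of_dvd_odd hodd hdvd
  have hmdodd : Odd (m / d) := odd_of_dvd_odd hodd (Nat.div_dvd_of_dvd hdvd)
  have hq1 : (2*m) / d = 2 * (m / d) := by
    rw [Nat.mul_div_assoc 2 hdvd]
  have hq2 : (2*m) / (2*d) = m / d := by
    exact Nat.mul_div_mul_left m d (by norm_num)
  have hcop2 : Nat.Coprime 2 (m / d) := by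
    rw [Nat.prime_two.coprime_iff_not_dvd]
    intro h
    have := Nat.odd_iff.mp hmdodd
    omega
  have hmu1 : μ (2 * (m / d)) = -μ (m / d) := by
    rw [ArithmeticFunction.isMultiplicative_moebius.map_mul_of_coprime hcop2,
      ArithmeticFunction.moebius_apply_prime Nat.prime_two]
    ring
  have hpowid : (1 : ℂ) - v ^ (2*d) = (1 - v ^ d) * (1 - (-v) ^ d) := by
    rw [hddodd.neg_pow]
    rw [mul_comm 2 d, pow_mul]
    ring
  have hlogsplit : Real.log (Complex.abs (1 - v ^ (2*d)))
      = Real.log (Complex.abs (1 - v ^ d)) + Real.log (Complex.abs (1 - (-v) ^ d)) := by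
    rw [hpowid, map_mul]
    refine Real.log_mul ?_ ?_
    · have := half_le_abs_one_sub_pow v hv d hd0; positivity
    · have := half_le_abs_one_sub_pow (-v) (by simpa using hv) d hd0
      positivity
  simp only [hGdef, hq1, hq2, hmu1, hlogsplit]
  push_cast
  ring


theorem cyclotomic_complex_bounds (z : ℂ) (hz : 2 ≤ ‖z‖) (n : ℕ) (hn : 0 < n) :
    (1 / 2) * ‖z‖ ^ n.totient ≤ ‖(Polynomial.cyclotomic n ℂ).eval z‖ ∧
    ‖(Polynomial.cyclotomic n ℂ).eval z‖ < 2 * ‖z‖ ^ n.totient ∧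
    ((1 / 2) * ‖z‖ ^ n.totient = ‖(Polynomial.cyclotomic n ℂ).eval z‖ →
      (n = 1 ∧ z = 2) ∨ (n = 2 ∧ z = -2)) := by
  simp only [Complex.norm_eq_abs] at hz ⊢
  have hr0 : (0:ℝ) < Complex.abs z := by linarith
  have hz0 : z ≠ 0 := by
    intro h; rw [h] at hz; simp at hz; linarith
  match n, hn with
  | 1, _ => {
    rw [show Nat.totient 1 = 1 from Nat.totient_one, cyclotomic_one, pow_one]
    simp only [eval_sub, eval_X, eval_one]
    have h1 : Complex.abs z - 1 ≤ Complex.abs (z - 1) := by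
      rw [← Complex.norm_eq_abs, ← Complex.norm_eq_abs]
      simpa using norm_sub_norm_le z 1
    have h2 : Complex.abs (z - 1) ≤ Complex.abs z + 1 := by
      rw [← Complex.norm_eq_abs, ← Complex.norm_eq_abs]
      simpa using norm_sub_le z 1
    refine ⟨by linarith, by linarith, ?_⟩
    intro heq
    left
    refine ⟨by trivial, ?_⟩
    have hr2 : Complex.abs z = 2 := by linarith
    have habs : Complex.abs (z - 1) = 1 := by rw [← heq, hr2]; norm_num
    have e1 : z.re * z.re + z.im * z.im = 4 := by
      have := Complex.sq_abs z
      rw [hr2, Complex.normSq_apply] at this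
      nlinarith
    have e2 : (z.re - 1) * (z.re - 1) + z.im * z.im = 1 := by
      have := Complex.sq_abs (z - 1)
      rw [habs, Complex.normSq_apply] at this
      simp only [Complex.sub_re, Complex.sub_im, Complex.one_re, Complex.one_im] at this
      nlinarith
    have hre : z.re = 2 := by nlinarith
    have him : z.im = 0 := by nlinarith
    apply Complex.ext <;> simp [hre, him]
  }
  | 2, _ => {
    rw [show Nat.totient 2 = 1 by decide, cyclotomic_two, pow_one]
    simp only [eval_add, eval_X, eval_one]
    have h1 : Complex.abs z - 1 ≤ Complex.abs (z + 1) := by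
      rw [← Complex.norm_eq_abs, ← Complex.norm_eq_abs]
      have : z + 1 = z - (-1) := by ring
      rw [this]
      simpa using norm_sub_norm_le z (-1)
    have h2 : Complex.abs (z + 1) ≤ Complex.abs z + 1 := by
      rw [← Complex.norm_eq_abs, ← Complex.norm_eq_abs]
      simpa using norm_add_le z 1
    refine ⟨by linarith, by linarith, ?_⟩
    intro heq
    right
    refine ⟨by trivial, ?_⟩
    have hr2 : Complex.abs z = 2 := by linarith
    have habs : Complex.abs (z + 1) = 1 := by rw [← heq, hr2]; norm_num
    have e1 : z.re * z.re + z.im * z.im = 4 := by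
      have := Complex.sq_abs z
      rw [hr2, Complex.normSq_apply] at this
      nlinarith
    have e2 : (z.re + 1) * (z.re + 1) + z.im * z.im = 1 := by
      have := Complex.sq_abs (z + 1)
      rw [habs, Complex.normSq_apply] at this
      simp only [Complex.add_re, Complex.add_im, Complex.one_re, Complex.one_im] at this
      nlinarith
    have hre : z.re = -2 := by nlinarith
    have him : z.im = 0 := by nlinarith
    apply Complex.ext <;> simp [hre, him]
  }
  | (k+3), _ => {
    set n := k + 3 with hndef
    have hn0 : 0 < n := by omega
    have hn3 : 3 ≤ n := by omega
    have hvne : z⁻¹ ≠ 0 := inv_ne_zero hz0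
    have hvabs : Complex.abs z⁻¹ ≤ 1/2 := by
      rw [map_inv₀, inv_le_comm₀ (by linarith) (by norm_num)]
      linarith
    have hB : |∑ d ∈ n.divisors, ((μ (n / d) : ℤ) : ℝ)
        * Real.log (Complex.abs (1 - z⁻¹ ^ d))| < Real.log 2 := by
      by_cases hsf : Squarefree n
      · rcases Nat.even_or_odd n with he | ho
        · obtain ⟨m, hm⟩ := he
          have hn2 : n = 2 * m := by omega
          have hm0 : 0 < m := by omega
          have hmodd : Odd m := by
            rcases Nat.even_or_odd m with hme | hmo
            · exfalso
              obtain ⟨j, hj⟩ := hme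
              have h4 : 2 * 2 ∣ n := ⟨j, by omega⟩
              exact Nat.prime_two.not_isUnit (hsf 2 h4)
            · exact hmo
          have hm3 : 3 ≤ m := by
            have : m ≠ 1 := by omega
            rcases Nat.odd_iff.mp hmodd with h
            omega
          have hsfm : Squarefree m := hsf.squarefree_of_dvd ⟨2, by omega⟩
          rw [hn2, even_reduction m hm0 hmodd z⁻¹ hvabs]
          exact core_odd m hm3 hmodd hsfm (-z⁻¹) (by simpa using hvne) (by simpa using hvabs)
        · exact core_odd n hn3 ho hsf z⁻¹ hvne hvabs
      · exact core_nonsf n hn0 hsf z⁻¹ hvabs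
    rw [← master_sum z hz n hn0, abs_lt] at hB
    obtain ⟨hlow, hhigh⟩ := hB
    have hpos : 0 < Complex.abs ((cyclotomic n ℂ).eval z) := cyclo_abs_pos z hz n hn0
    have hrpow : (0:ℝ) < Complex.abs z ^ n.totient := by positivity
    have hlog_low : Real.log ((1/2) * Complex.abs z ^ n.totient)
        < Real.log (Complex.abs ((cyclotomic n ℂ).eval z)) := by
      rw [Real.log_mul (by norm_num) hrpow.ne', Real.log_pow,
        show (1/2:ℝ) = 2⁻¹ by norm_num, Real.log_inv]
      linarith
    have hlog_high : Real.log (Complex.abs ((cyclotomic n ℂ).eval z))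
        < Real.log (2 * Complex.abs z ^ n.totient) := by
      rw [Real.log_mul (by norm_num) hrpow.ne', Real.log_pow]
      linarith
    have hlt1 : (1/2) * Complex.abs z ^ n.totient
        < Complex.abs ((cyclotomic n ℂ).eval z) := by
      have := Real.exp_lt_exp.mpr hlog_low
      rwa [Real.exp_log (by positivity), Real.exp_log hpos] at this
    have hlt2 : Complex.abs ((cyclotomic n ℂ).eval z)
        < 2 * Complex.abs z ^ n.totient := by
      have := Real.exp_lt_exp.mpr hlog_high
      rwa [Real.exp_log hpos, Real.exp_log (by positivity)] at this
    exact ⟨hlt1.le, hlt2, fun heq => absurd heq (ne_of_lt hlt1)⟩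
  }
end

section
/- If m and n are distinct positive integers and a ≥ 2 is an integer, then Φ_m(a) ≠ Φ_n(a), except when a = 2 and {m, n} = {2, 6}. -/
/-!
Suppose `m < n` and `Φ_m(a) = Φ_n(a) = N`. As `Φ_1(a) = a - 1 < Φ_n(a)`, we have `m ≥ 2`, so
`N > 1` has a prime factor `p`. Reducing modulo `p`, both indices have the form `p ^ l * d` and
`p ^ k * d` with `l < k`, where `d` is the order of `a` modulo `p`, so `d ∣ p - 1`.

The estimates `(x - 1) ^ φ(n) < Φ_n(x) ≤ (x + 1) ^ φ(n)` show that `Φ_{m'}(x) < Φ_{n'}(y)`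
whenever `φ(m') ≤ φ(n')` and `y ≥ x + 2`. Since `Φ_{p ^ (j + 1) * d}(x) = Φ_{p * d}(x ^ p ^ j)`,
this rules out `k ≥ 2`. In the remaining case `m = d`, `n = p * d`, and
`Φ_d(a ^ p) = Φ_{p * d}(a) Φ_d(a) = N ^ 2` forces `a ^ p - 1 < (a + 1) ^ 2`; as `p ≥ 3`, this
leaves only `a = 2`, `p = 3`, `d = 2`.
-/

open Polynomial

theorem cyclotomic_eval_intCast (R : Type*) [Ring R] (n : ℕ) (x : ℤ) :
    (cyclotomic n R).eval (x : R) = (((cyclotomic n ℤ).eval x : ℤ) : R) := by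
  simpa using cyclotomic.eval_apply x n (Int.castRingHom R)

theorem sub_one_pow_totient_lt_cyclotomic_eval_int {n : ℕ} {x : ℤ} (hn : 2 ≤ n) (hx : 1 < x) :
    (x - 1) ^ n.totient < (cyclotomic n ℤ).eval x := by
  have h := sub_one_pow_totient_lt_cyclotomic_eval hn (by exact_mod_cast hx : (1 : ℝ) < x)
  rw [cyclotomic_eval_intCast] at h
  exact_mod_cast h

theorem cyclotomic_eval_le_add_one_pow_totient_int (n : ℕ) {x : ℤ} (hx : 1 < x) :
    (cyclotomic n ℤ).eval x ≤ (x + 1) ^ n.totient := by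
  have h := cyclotomic_eval_le_add_one_pow_totient (by exact_mod_cast hx : (1 : ℝ) < x) n
  rw [cyclotomic_eval_intCast] at h
  exact_mod_cast h

theorem sub_one_lt_cyclotomic_eval_int {n : ℕ} {x : ℤ} (hn : 2 ≤ n) (hx : 1 < x) :
    x - 1 < (cyclotomic n ℤ).eval x :=
  calc x - 1 ≤ (x - 1) ^ n.totient :=
        le_self_pow₀ (by omega) (Nat.totient_pos.2 (by omega)).ne'
    _ < (cyclotomic n ℤ).eval x := sub_one_pow_totient_lt_cyclotomic_eval_int hn hx

theorem cyclotomic_eval_lt_cyclotomic_eval {m n : ℕ} {x y : ℤ} (hmn : m.totient ≤ n.totient)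
    (hn : 2 ≤ n) (hx : 1 < x) (hxy : x + 2 ≤ y) :
    (cyclotomic m ℤ).eval x < (cyclotomic n ℤ).eval y :=
  calc (cyclotomic m ℤ).eval x ≤ (x + 1) ^ m.totient :=
        cyclotomic_eval_le_add_one_pow_totient_int m hx
    _ ≤ (y - 1) ^ m.totient := pow_le_pow_left₀ (by omega) (by omega) _
    _ ≤ (y - 1) ^ n.totient := pow_le_pow_right₀ (by omega) hmn
    _ < (cyclotomic n ℤ).eval y := sub_one_pow_totient_lt_cyclotomic_eval_int hn (by omega)

theorem add_two_le_pow {x : ℤ} {e : ℕ} (hx : 2 ≤ x) (he : 2 ≤ e) : x + 2 ≤ x ^ e :=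
  calc x + 2 ≤ x ^ 2 := by nlinarith
    _ ≤ x ^ e := pow_le_pow_right₀ (by omega) he

theorem cyclotomic_prime_pow_succ_mul_eval {R : Type*} [CommRing R] {p : ℕ} (hp : p.Prime)
    (d j : ℕ) (x : R) :
    (cyclotomic (p ^ (j + 1) * d) R).eval x = (cyclotomic (p * d) R).eval (x ^ p ^ j) := by
  induction j generalizing x with
  | zero => simp
  | succ j ih =>
    have hdvd : p ∣ p ^ (j + 1) * d := (dvd_pow_self p j.succ_ne_zero).mul_right d
    rw [show p ^ (j + 1 + 1) * d = p ^ (j + 1) * d * p by ring,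
      ← cyclotomic_expand_eq_cyclotomic hp hdvd, expand_eval, ih, ← pow_mul, ← pow_succ']

theorem cyclotomic_eval_pow_prime {R : Type*} [CommRing R] {p d : ℕ} (hp : p.Prime)
    (hpd : ¬p ∣ d) (x : R) :
    (cyclotomic d R).eval (x ^ p) = (cyclotomic (p * d) R).eval x * (cyclotomic d R).eval x := by
  rw [← expand_eval, cyclotomic_expand_eq_cyclotomic_mul hp hpd, eval_mul, mul_comm d p]

theorem eq_prime_pow_mul_orderOf_of_dvd_cyclotomic_eval {p n : ℕ} [hp : Fact p.Prime] {a : ℤ}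
    (hn : n ≠ 0) (h : (p : ℤ) ∣ (cyclotomic n ℤ).eval a) :
    n = p ^ n.factorization p * orderOf (a : ZMod p) := by
  have : NeZero ((ordCompl[p] n : ℕ) : ZMod p) :=
    ⟨(ZMod.natCast_eq_zero_iff _ p).not.2 (Nat.not_dvd_ordCompl hp.out hn)⟩
  have hsplit : p ^ n.factorization p * ordCompl[p] n = n := Nat.ordProj_mul_ordCompl_eq_self n p
  have hroot :
      (cyclotomic (p ^ n.factorization p * ordCompl[p] n) (ZMod p)).IsRoot (a : ZMod p) := by
    rwa [hsplit, IsRoot.def, cyclotomic_eval_intCast, ZMod.intCast_zmod_eq_zero_iff_dvd]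
  rw [← (isRoot_cyclotomic_prime_pow_mul_iff_of_charP.1 hroot).eq_orderOf, hsplit]

theorem cyclotomic_eval_prime_pow_mul_lt {p d l k : ℕ} (hp : p.Prime) (hd : d ≠ 0) (hlk : l < k)
    (hk : 2 ≤ k) {a : ℤ} (ha : 2 ≤ a) :
    (cyclotomic (p ^ l * d) ℤ).eval a < (cyclotomic (p ^ k * d) ℤ).eval a := by
  obtain ⟨j, rfl⟩ : ∃ j, k = j + 1 + 1 := ⟨k - 2, by omega⟩
  have hpd : 2 ≤ p * d := le_mul_of_le_of_one_le hp.two_le (by omega)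
  rw [cyclotomic_prime_pow_succ_mul_eval hp]
  rcases l with _ | i
  · have htot : d.totient ≤ (p * d).totient :=
      Nat.le_of_dvd (Nat.totient_pos.2 (by omega)) (Nat.totient_dvd_of_dvd (dvd_mul_left d p))
    rw [pow_zero, one_mul]
    exact cyclotomic_eval_lt_cyclotomic_eval htot hpd (by omega)
      (add_two_le_pow ha (le_trans hp.two_le (le_self_pow₀ hp.one_le (by omega))))
  · have hx : 2 ≤ a ^ p ^ i := le_trans ha (le_self_pow₀ (by omega) (pow_pos hp.pos i).ne')
    have hpow : a ^ p ^ (j + 1) = (a ^ p ^ i) ^ p ^ (j + 1 - i) := by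
      rw [← pow_mul, ← pow_add, Nat.add_sub_cancel' (by omega)]
    rw [cyclotomic_prime_pow_succ_mul_eval hp, hpow]
    exact cyclotomic_eval_lt_cyclotomic_eval le_rfl hpd (by omega)
      (add_two_le_pow hx (le_trans hp.two_le (le_self_pow₀ hp.one_le (by omega))))

theorem pow_sub_one_lt_sq_of_cyclotomic_eval_eq {p d : ℕ} (hp : p.Prime) (hpd : ¬p ∣ d)
    (hd : 2 ≤ d) {a : ℤ} (ha : 2 ≤ a)
    (h : (cyclotomic d ℤ).eval a = (cyclotomic (p * d) ℤ).eval a) :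
    a ^ p - 1 < (a + 1) ^ 2 := by
  set N := (cyclotomic d ℤ).eval a
  have hsq : (cyclotomic d ℤ).eval (a ^ p) = N ^ 2 := by
    rw [cyclotomic_eval_pow_prime hp hpd, ← h, sq]
  have hN : 0 ≤ N := by linarith [sub_one_lt_cyclotomic_eval_int hd (by omega : 1 < a)]
  have hap : 1 < a ^ p := lt_of_lt_of_le (by omega) (le_self_pow₀ (by omega) hp.ne_zero)
  refine lt_of_pow_lt_pow_left₀ d.totient (by positivity) ?_
  calc (a ^ p - 1) ^ d.totient < N ^ 2 := hsq ▸ sub_one_pow_totient_lt_cyclotomic_eval_int hd hap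
    _ ≤ ((a + 1) ^ d.totient) ^ 2 :=
        pow_le_pow_left₀ hN (cyclotomic_eval_le_add_one_pow_totient_int d (by omega)) 2
    _ = ((a + 1) ^ 2) ^ d.totient := by rw [← pow_mul, ← pow_mul, mul_comm]

theorem eq_two_and_eq_three_of_pow_sub_one_lt_sq {a : ℤ} {p : ℕ} (ha : 2 ≤ a) (hp : 3 ≤ p)
    (h : a ^ p - 1 < (a + 1) ^ 2) : a = 2 ∧ p = 3 := by
  have ha2 : a = 2 := by
    have : a ^ 3 ≤ a ^ p := pow_le_pow_right₀ (by omega) hp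
    nlinarith
  subst ha2
  refine ⟨rfl, ?_⟩
  by_contra hp3
  have : (2 : ℤ) ^ 4 ≤ 2 ^ p := pow_le_pow_right₀ (by norm_num) (by omega)
  norm_num at h this
  omega

theorem cyclotomic_eval_eq_of_two_le_of_lt {m n : ℕ} (hm : 2 ≤ m) (hmn : m < n) {a : ℤ}
    (ha : 2 ≤ a) (h : (cyclotomic m ℤ).eval a = (cyclotomic n ℤ).eval a) :
    a = 2 ∧ m = 2 ∧ n = 6 := by
  have hN : 1 < (cyclotomic m ℤ).eval a := by
    linarith [sub_one_lt_cyclotomic_eval_int hm (by omega : 1 < a)]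
  obtain ⟨p, hp, hpm⟩ : ∃ p : ℕ, p.Prime ∧ (p : ℤ) ∣ (cyclotomic m ℤ).eval a := by
    obtain ⟨p, hp, hdvd⟩ := Nat.exists_prime_and_dvd (n := ((cyclotomic m ℤ).eval a).natAbs)
      (by omega)
    exact ⟨p, hp, Int.natCast_dvd.2 hdvd⟩
  have := Fact.mk hp
  have hm' := eq_prime_pow_mul_orderOf_of_dvd_cyclotomic_eval (by omega) hpm
  have hn' := eq_prime_pow_mul_orderOf_of_dvd_cyclotomic_eval (by omega) (h ▸ hpm)
  set d := orderOf (a : ZMod p) with hd_def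
  have hd : d ≠ 0 := by
    rintro hd
    rw [hd, mul_zero] at hm'
    omega
  have hdp : d ∣ p - 1 :=
    ZMod.orderOf_dvd_card_sub_one fun h0 => hd (by rw [hd_def, h0, orderOf_zero])
  have hlk : m.factorization p < n.factorization p := by
    refine (Nat.pow_lt_pow_iff_right hp.one_lt).1 (Nat.lt_of_mul_lt_mul_right (a := d) ?_)
    rwa [← hm', ← hn']
  rcases Nat.lt_or_ge (n.factorization p) 2 with hk | hk
  · rw [show m.factorization p = 0 by omega, pow_zero, one_mul] at hm'
    rw [show n.factorization p = 1 by omega, pow_one] at hn'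
    have hdle : d ≤ p - 1 := Nat.le_of_dvd (by have := hp.two_le; omega) hdp
    have hpd : ¬p ∣ d := fun hpd => by have := Nat.le_of_dvd (by omega) hpd; omega
    rw [hm', hn'] at h
    obtain ⟨rfl, rfl⟩ := eq_two_and_eq_three_of_pow_sub_one_lt_sq ha (by omega)
      (pow_sub_one_lt_sq_of_cyclotomic_eval_eq hp hpd (by omega) ha h)
    omega
  · rw [hm', hn'] at h
    exact absurd h (cyclotomic_eval_prime_pow_mul_lt hp hd hlk hk ha).ne

theorem cyclotomic_eval_eq_of_lt {m n : ℕ} (hm : 0 < m) (hmn : m < n) {a : ℤ} (ha : 2 ≤ a)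
    (h : (cyclotomic m ℤ).eval a = (cyclotomic n ℤ).eval a) :
    a = 2 ∧ m = 2 ∧ n = 6 := by
  obtain rfl | hm : m = 1 ∨ 2 ≤ m := by omega
  · have := sub_one_lt_cyclotomic_eval_int (by omega : 2 ≤ n) (by omega : 1 < a)
    simp only [cyclotomic_one, eval_sub, eval_X, eval_one] at h
    omega
  · exact cyclotomic_eval_eq_of_two_le_of_lt hm hmn ha h

theorem cyclotomic_ne_at_int (m n : ℕ) (hm : 0 < m) (hn : 0 < n) (hmn : m ≠ n)
    (a : ℤ) (ha : 2 ≤ a)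
    (h : (Polynomial.cyclotomic m ℤ).eval a = (Polynomial.cyclotomic n ℤ).eval a) :
    a = 2 ∧ ({m, n} : Set ℕ) = {2, 6} := by
  rcases hmn.lt_or_gt with hlt | hlt
  · obtain ⟨rfl, rfl, rfl⟩ := cyclotomic_eval_eq_of_lt hm hlt ha h
    exact ⟨rfl, rfl⟩
  · obtain ⟨rfl, rfl, rfl⟩ := cyclotomic_eval_eq_of_lt hn hlt ha h.symm
    exact ⟨rfl, Set.pair_comm 6 2⟩
end

section
/- For every positive integer n and every prime p not dividing n with n squarefree, f_n(x) · f_{np}(x) = Π_{d | n} (1 − x^{-pd})^{μ(n/d)} for all real x ≥ 2, where f_k(x) = Φ_k(x)/x^{φ(k)}. -/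
open Polynomial ArithmeticFunction
open scoped ArithmeticFunction.Moebius

private lemma zpow_sum_aux {ι : Type*} {x : ℝ} (hx : x ≠ 0) (s : Finset ι) (f : ι → ℤ) :
    x ^ (∑ i ∈ s, f i) = ∏ i ∈ s, x ^ f i := by
  classical
  induction s using Finset.cons_induction with
  | empty => simp
  | cons a s ha ih => rw [Finset.sum_cons, Finset.prod_cons, zpow_add₀ hx, ih]

private lemma tot_sum_aux (n : ℕ) (hn : 0 < n) :
    ∑ q ∈ n.divisorsAntidiagonal, (μ q.1 : ℤ) * q.2 = (n.totient : ℤ) := by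
  have h := (ArithmeticFunction.sum_eq_iff_sum_smul_moebius_eq
    (R := ℤ) (f := fun i => (i.totient : ℤ)) (g := fun i => (i : ℤ))).mp ?_ n hn
  · simpa [zsmul_eq_mul] using h
  · intro m hm
    exact_mod_cast Nat.sum_totient m

private lemma key_aux (x : ℝ) (hx : 1 < x) (n : ℕ) (hn : 0 < n) :
    (Polynomial.cyclotomic n ℝ).eval x / x ^ n.totient =
      ∏ d ∈ n.divisors, (1 - (x ^ d)⁻¹) ^ (μ (n / d)) := by
  have hx0 : (0 : ℝ) < x := lt_trans one_pos hx
  have hcyc : (Polynomial.cyclotomic n ℝ).eval x =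
      ∏ q ∈ n.divisorsAntidiagonal, (x ^ q.2 - 1) ^ (μ q.1) := by
    refine ((ArithmeticFunction.prod_eq_iff_prod_pow_moebius_eq_of_nonzero
      (R := ℝ) (f := fun i => (Polynomial.cyclotomic i ℝ).eval x)
      (g := fun i => x ^ i - 1) (fun m hm => (cyclotomic_pos' m hx).ne')
      (fun m hm => ?_)).mp (fun m hm => ?_) n hn).symm
    · have : (1 : ℝ) < x ^ m := one_lt_pow₀ hx hm.ne'
      exact (sub_pos.mpr this).ne'
    · have := congrArg (Polynomial.eval x) (prod_cyclotomic_eq_X_pow_sub_one hm ℝ)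
      simpa [Polynomial.eval_prod] using this
  have hpow : x ^ n.totient =
      ∏ q ∈ n.divisorsAntidiagonal, (x ^ q.2 : ℝ) ^ (μ q.1) := by
    have : ∀ q ∈ n.divisorsAntidiagonal, (x ^ q.2 : ℝ) ^ (μ q.1) = x ^ ((μ q.1 : ℤ) * q.2) := by
      intro q hq
      rw [mul_comm, zpow_mul, zpow_natCast]
    rw [Finset.prod_congr rfl this, ← zpow_sum_aux hx0.ne', tot_sum_aux n hn, zpow_natCast]
  rw [hcyc, hpow, ← Finset.prod_div_distrib]
  have h2 : ∀ q ∈ n.divisorsAntidiagonal,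
      (x ^ q.2 - 1) ^ (μ q.1) / (x ^ q.2 : ℝ) ^ (μ q.1) = (1 - (x ^ q.2)⁻¹) ^ (μ q.1) := by
    intro q hq
    rw [← div_zpow]
    congr 1
    have hne : (x ^ q.2 : ℝ) ≠ 0 := (pow_pos hx0 _).ne'
    field_simp
  rw [Finset.prod_congr rfl h2]
  exact Nat.prod_divisorsAntidiagonal' (f := fun i j => (1 - (x ^ j)⁻¹) ^ (μ i))

theorem f_mul_f_np (n : ℕ) (hn : 0 < n) (hsq : Squarefree n) (p : ℕ) (hp : p.Prime)
    (hpn : ¬ p ∣ n) (x : ℝ) (hx : 2 ≤ x) :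
    ((Polynomial.cyclotomic n ℝ).eval x / x ^ n.totient) *
      ((Polynomial.cyclotomic (n * p) ℝ).eval x / x ^ (n * p).totient) =
    ∏ d ∈ n.divisors, (1 - (x ^ (p * d))⁻¹) ^ (ArithmeticFunction.moebius (n / d)) := by
  have hx1 : (1 : ℝ) < x := lt_of_lt_of_le one_lt_two hx
  have hx0 : (0 : ℝ) < x := lt_trans one_pos hx1
  have hxp1 : (1 : ℝ) < x ^ p := one_lt_pow₀ hx1 hp.ne_zero
  have htot : n.totient + (n * p).totient = p * n.totient := by
    have hco : n.Coprime p := ((hp.coprime_iff_not_dvd).mpr hpn).symm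
    rw [Nat.totient_mul hco, Nat.totient_prime hp]
    rcases Nat.exists_eq_succ_of_ne_zero hp.ne_zero with ⟨q, rfl⟩
    simp only [Nat.succ_sub_one, Nat.succ_eq_add_one]
    ring
  have heval : (Polynomial.cyclotomic n ℝ).eval x * (Polynomial.cyclotomic (n * p) ℝ).eval x =
      (Polynomial.cyclotomic n ℝ).eval (x ^ p) := by
    rw [← Polynomial.expand_eval, Polynomial.cyclotomic_expand_eq_cyclotomic_mul hp hpn,
      Polynomial.eval_mul]
    ring
  have key := key_aux (x ^ p) hxp1 n hn
  calc ((Polynomial.cyclotomic n ℝ).eval x / x ^ n.totient) *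
      ((Polynomial.cyclotomic (n * p) ℝ).eval x / x ^ (n * p).totient)
      = ((Polynomial.cyclotomic n ℝ).eval x * (Polynomial.cyclotomic (n * p) ℝ).eval x) /
        x ^ (n.totient + (n * p).totient) := by rw [pow_add]; ring
    _ = (Polynomial.cyclotomic n ℝ).eval (x ^ p) / (x ^ p) ^ n.totient := by
        rw [heval, htot, pow_mul]
    _ = ∏ d ∈ n.divisors, (1 - ((x ^ p) ^ d)⁻¹) ^ (μ (n / d)) := key
    _ = ∏ d ∈ n.divisors, (1 - (x ^ (p * d))⁻¹) ^ (μ (n / d)) := by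
        refine Finset.prod_congr rfl fun d hd => ?_
        rw [← pow_mul]
end
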